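/- arXiv:1602.02719 — 9 statements merged into one kernel-verified Lean document; each statement's English description precedes it below -/
import Mathlib

section
/- Let X be an M×N matrix (rows indexed by [M] = {1,…,M}, columns by [N] = {1,…,N}, entries in an arbitrary type) in which any two entries lying in the same column are distinct. Let S be a set of positions of X such that for all positions a = (i₁,j₁) and b = (i₂,j₂) in S with i₁ < i₂ and j₁ < j₂ (i.e., a lies strictly above and strictly to the left of b), the entries satisfy X_a = X_b. Then |S| ≤ M + 2N. -/
/-- Let `X` be an `M × N` matrix whose entries within any single column are
pairwise distinct.  Let `S` be a set of positions such that whenever a position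
`a ∈ S` lies strictly above and strictly to the left of a position `b ∈ S`, the
corresponding entries of `X` are equal.  Then `|S| ≤ M + 2N`. -/
theorem box_order {M N : ℕ} {β : Type*} (X : Fin M → Fin N → β)
    (hcol : ∀ j : Fin N, Function.Injective (fun i : Fin M => X i j))
    (S : Finset (Fin M × Fin N))
    (hS : ∀ a ∈ S, ∀ b ∈ S, a.1 < b.1 → a.2 < b.2 → X a.1 a.2 = X b.1 b.2) :
    S.card ≤ M + 2 * N := by
  classical
  set p : Fin M × Fin N → Prop := fun a => ∃ b ∈ S, a.1 < b.1 ∧ a.2 < b.2 with hp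
  have hsplit : (S.filter p).card + (S.filter fun a => ¬ p a).card = S.card :=
    Finset.card_filter_add_card_filter_not p
  -- elements with a dominator: at most one per column
  have hU : (S.filter p).card ≤ N := by
    have hinj : Set.InjOn (fun a : Fin M × Fin N => a.2) (S.filter p) := by
      intro a ha a' ha' h
      simp only [Finset.coe_filter, Set.mem_setOf_eq] at ha ha'
      obtain ⟨haS, hap⟩ := ha
      obtain ⟨ha'S, ha'p⟩ := ha'
      simp only at h
      rcases lt_trichotomy a.1 a'.1 with hlt | heq | hgt
      · obtain ⟨d, hdS, hd1, hd2⟩ := ha'p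
        have e1 : X a.1 a.2 = X d.1 d.2 :=
          hS a haS d hdS (hlt.trans hd1) (h ▸ hd2)
        have e2 : X a'.1 a'.2 = X d.1 d.2 := hS a' ha'S d hdS hd1 hd2
        have e3 : X a.1 a.2 = X a'.1 a'.2 := e1.trans e2.symm
        rw [← h] at e3
        exact absurd (hcol a.2 e3) hlt.ne
      · exact Prod.ext heq h
      · obtain ⟨d, hdS, hd1, hd2⟩ := hap
        have e1 : X a'.1 a'.2 = X d.1 d.2 :=
          hS a' ha'S d hdS (hgt.trans hd1) (h ▸ hd2)
        have e2 : X a.1 a.2 = X d.1 d.2 := hS a haS d hdS hd1 hd2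
        have e3 : X a.1 a.2 = X a'.1 a'.2 := e2.trans e1.symm
        rw [← h] at e3
        exact absurd (hcol a.2 e3) hgt.ne'
    calc (S.filter p).card ≤ (Finset.univ : Finset (Fin N)).card :=
          Finset.card_le_card_of_injOn _ (fun _ _ => Finset.mem_univ _) hinj
      _ = N := by simp
  -- elements without a dominator form an "antichain"; inject via i - j
  have hT : (S.filter fun a => ¬ p a).card ≤ M + N := by
    have hinj : Set.InjOn (fun a : Fin M × Fin N => (a.1 : ℤ) - (a.2 : ℤ))
        (S.filter fun a => ¬ p a) := by
      intro a ha a' ha' h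
      simp only [Finset.coe_filter, Set.mem_setOf_eq] at ha ha'
      obtain ⟨haS, hap⟩ := ha
      obtain ⟨ha'S, ha'p⟩ := ha'
      simp only at h
      rcases lt_trichotomy a.1 a'.1 with hlt | heq | hgt
      · exfalso
        apply hap
        refine ⟨a', ha'S, hlt, ?_⟩
        have h1 : (a.1 : ℤ) < (a'.1 : ℤ) := by exact_mod_cast hlt
        have h2 : (a.2 : ℤ) < (a'.2 : ℤ) := by omega
        exact_mod_cast h2
      · have : (a.2 : ℤ) = a'.2 := by
          have h1 : (a.1 : ℤ) = (a'.1 : ℤ) := by exact_mod_cast Fin.val_eq_of_eq heq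
          omega
        exact Prod.ext heq (Fin.ext (by exact_mod_cast this))
      · exfalso
        apply ha'p
        refine ⟨a, haS, hgt, ?_⟩
        have h1 : (a'.1 : ℤ) < (a.1 : ℤ) := by exact_mod_cast hgt
        have h2 : (a'.2 : ℤ) < (a.2 : ℤ) := by omega
        exact_mod_cast h2
    have hmaps : ∀ a ∈ S.filter fun a => ¬ p a,
        ((a.1 : ℤ) - (a.2 : ℤ)) ∈ Finset.Icc (1 - (N : ℤ)) ((M : ℤ) - 1) := by
      intro a _
      have h1 : (a.1 : ℤ) < M := by exact_mod_cast a.1.isLt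
      have h2 : (a.2 : ℤ) < N := by exact_mod_cast a.2.isLt
      have h3 : (0 : ℤ) ≤ a.1 := Int.ofNat_nonneg _
      have h4 : (0 : ℤ) ≤ a.2 := Int.ofNat_nonneg _
      simp only [Finset.mem_Icc]
      omega
    have := Finset.card_le_card_of_injOn _ hmaps hinj
    have hcard : (Finset.Icc (1 - (N : ℤ)) ((M : ℤ) - 1)).card
        = ((M : ℤ) - 1 + 1 - (1 - N)).toNat := Int.card_Icc _ _
    rw [hcard] at this
    omega
  omega
end

section
/- Let k ≥ 2, let n ≥ 1, and let A ∈ L_n^k. Suppose S ⊆ [n]^k is a set of positions such that for all a, b ∈ S with a_i < b_i for every i ∈ {1,…,k}, one has f_A(a) = f_A(b). Then |S| ≤ 3(k−1)·n^{k−1}. -/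
open scoped Classical

/-- `A : [n]^{k+1} → {0,1}` is an order-`n` `k`-dimensional permutation if every
line (obtained by fixing all coordinates but one) contains exactly one `1`. -/
def IsHDPerm (n k : ℕ) (A : (Fin (k + 1) → Fin n) → Bool) : Prop :=
  ∀ (j : Fin (k + 1)) (x : Fin (k + 1) → Fin n),
    ∃! t : Fin n, A (Function.update x j t) = true

/-- `L_n^k`: the finite set of order-`n` `k`-dimensional permutations. -/
noncomputable def HDPerms (n k : ℕ) : Finset ((Fin (k + 1) → Fin n) → Bool) :=
  Finset.univ.filter (fun A => IsHDPerm n k A)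

/-- A monotone subsequence of length `m` in `A`: a sequence of `m` support
positions that is strictly monotone (in some direction) in every coordinate. -/
def IsMonoSub (n k m : ℕ) (A : (Fin (k + 1) → Fin n) → Bool)
    (α : Fin m → (Fin (k + 1) → Fin n)) : Prop :=
  (∀ i, A (α i) = true) ∧
    ∀ j : Fin (k + 1), StrictMono (fun i => α i j) ∨ StrictAnti (fun i => α i j)

/-- `H(A)`: the maximum length of a monotone subsequence of `A`. -/
noncomputable def HLen (n k : ℕ) (A : (Fin (k + 1) → Fin n) → Bool) : ℕ :=
  sSup {m : ℕ | ∃ α : Fin m → (Fin (k + 1) → Fin n), IsMonoSub n k m A α}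

/-- The strict partial order `<_c` on `[n]^{k+1}` induced by `c ∈ {0,1}^{k+1}`. -/
def cLT {n k : ℕ} (c : Fin (k + 1) → Bool) (x y : Fin (k + 1) → Fin n) : Prop :=
  ∀ i, if c i then x i < y i else y i < x i

/-- A `<_c`-monotone subsequence of length `m` in `A`: a `<_c`-chain of `m`
support positions. -/
def IsCMonoSub (n k m : ℕ) (c : Fin (k + 1) → Bool)
    (A : (Fin (k + 1) → Fin n) → Bool) (α : Fin m → (Fin (k + 1) → Fin n)) : Prop :=
  (∀ i, A (α i) = true) ∧ ∀ i j : Fin m, i < j → cLT c (α i) (α j)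

/-- If `A ∈ L_n^k` and `S ⊆ [n]^k` is such that `f_A(a) = f_A(b)` whenever
`a, b ∈ S` satisfy `a_i < b_i` for every coordinate `i`, then
`|S| ≤ 3(k-1) n^{k-1}`. -/
theorem hypercube_anti_chains (n k : ℕ) (hk : 2 ≤ k) (hn : 1 ≤ n)
    (A : (Fin (k + 1) → Fin n) → Bool) (hA : IsHDPerm n k A)
    (f : (Fin k → Fin n) → Fin n) (hf : ∀ a : Fin k → Fin n, A (Fin.snoc a (f a)) = true)
    (S : Finset (Fin k → Fin n))
    (hS : ∀ a ∈ S, ∀ b ∈ S, (∀ i : Fin k, a i < b i) → f a = f b) :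
    S.card ≤ 3 * (k - 1) * n ^ (k - 1) := by
  obtain ⟨m, rfl⟩ : ∃ m, k = m + 1 := ⟨k - 1, by omega⟩
  have hm : 1 ≤ m := by omega
  -- The Latin property: two support positions with the same value on a common
  -- axis line (in the last coordinate direction of `[n]^k`) coincide.
  have latin : ∀ a a' : Fin (m + 1) → Fin n, f a = f a' →
      Fin.init a = Fin.init a' → a = a' := by
    intro a a' hv hinit
    obtain ⟨t, -, huniq⟩ := hA (Fin.last m).castSucc (Fin.snoc a (f a))
    have snocj : (Fin.snoc a (f a) : Fin (m + 1 + 1) → Fin n) (Fin.last m).castSucc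
        = a (Fin.last m) := Fin.snoc_castSucc _ _ _
    have e1 : A (Function.update (Fin.snoc a (f a)) (Fin.last m).castSucc
        (a (Fin.last m))) = true := by
      rw [← snocj, Function.update_eq_self]
      exact hf a
    have e2' : Function.update (Fin.snoc a (f a)) (Fin.last m).castSucc
        (a' (Fin.last m)) = (Fin.snoc a' (f a) : Fin (m + 1 + 1) → Fin n) := by
      funext i
      rcases eq_or_ne i (Fin.last m).castSucc with rfl | hne
      · simp
      · rw [Function.update_of_ne hne]
        rcases Fin.eq_castSucc_or_eq_last i with ⟨l, rfl⟩ | rfl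
        · have hl : l ≠ Fin.last m := by
            intro h; exact hne (by rw [h])
          obtain ⟨r, rfl⟩ := Fin.exists_castSucc_eq.mpr hl
          have h1 : (Fin.snoc a (f a) : Fin (m + 1 + 1) → Fin n)
              (Fin.castSucc (Fin.castSucc r)) = a (Fin.castSucc r) := Fin.snoc_castSucc _ _ _
          have h2 : (Fin.snoc a' (f a) : Fin (m + 1 + 1) → Fin n)
              (Fin.castSucc (Fin.castSucc r)) = a' (Fin.castSucc r) := Fin.snoc_castSucc _ _ _
          rw [h1, h2]
          have := congrFun hinit r
          simpa [Fin.init] using this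
        · simp
    have e2 : A (Function.update (Fin.snoc a (f a)) (Fin.last m).castSucc
        (a' (Fin.last m))) = true := by
      rw [e2', hv]
      exact hf a'
    have hlast : a (Fin.last m) = a' (Fin.last m) := by
      rw [huniq _ e1, huniq _ e2]
    have hsn : Fin.snoc (Fin.init a) (a (Fin.last m))
        = (Fin.snoc (Fin.init a') (a' (Fin.last m)) : Fin (m + 1) → Fin n) := by
      rw [hinit, hlast]
    rwa [Fin.snoc_init_self, Fin.snoc_init_self] at hsn
  classical
  set P : (Fin (m + 1) → Fin n) → Prop := fun a => ∃ b ∈ S, ∀ i, b i < a i with hP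
  have hsplit := Finset.card_filter_add_card_filter_not (s := S) (p := P)
  -- Bound on non-minimal elements: at most one per axis line.
  have hRest : (S.filter P).card ≤ n ^ m := by
    have hcard : ((Finset.univ : Finset (Fin m → Fin n))).card = n ^ m := by simp
    rw [← hcard]
    apply Finset.card_le_card_of_injOn (fun a => Fin.init a) (fun a _ => Finset.mem_univ _)
    intro a ha a' ha' hinit
    simp only [Finset.mem_coe, Finset.mem_filter, hP] at ha ha'
    obtain ⟨haS, b, hbS, hb⟩ := ha
    obtain ⟨ha'S, b', hb'S, hb'⟩ := ha'
    have hcs : ∀ l : Fin m, a (Fin.castSucc l) = a' (Fin.castSucc l) := by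
      intro l
      have := congrFun hinit l
      simpa [Fin.init] using this
    rcases lt_trichotomy (a (Fin.last m)) (a' (Fin.last m)) with hlt | heq | hgt
    · have hba' : ∀ i, b i < a' i := by
        intro i
        rcases Fin.eq_castSucc_or_eq_last i with ⟨l, rfl⟩ | rfl
        · exact (hcs l) ▸ hb _
        · exact lt_trans (hb _) hlt
      have h1 := hS b hbS a haS hb
      have h2 := hS b hbS a' ha'S hba'
      exact latin a a' (h1.symm.trans h2) hinit
    · funext i
      rcases Fin.eq_castSucc_or_eq_last i with ⟨l, rfl⟩ | rfl
      · exact hcs l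
      · exact heq
    · have hb'a : ∀ i, b' i < a i := by
        intro i
        rcases Fin.eq_castSucc_or_eq_last i with ⟨l, rfl⟩ | rfl
        · exact (hcs l) ▸ hb' _
        · exact lt_trans (hb' _) hgt
      have h1 := hS b' hb'S a haS hb'a
      have h2 := hS b' hb'S a' ha'S hb'
      exact latin a a' (h1.symm.trans h2) hinit
  -- Bound on minimal elements: they form an antichain.
  have hMin : (S.filter fun a => ¬ P a).card ≤ (m + 1) * n ^ m := by
    have hcard : ((Finset.univ : Finset (Fin (m + 1) × (Fin m → Fin n)))).card
        = (m + 1) * n ^ m := by simp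
    rw [← hcard]
    have hex : ∀ a : Fin (m + 1) → Fin n, ∃ i : Fin (m + 1), ∀ j, (a i : ℕ) ≤ (a j : ℕ) := by
      intro a
      obtain ⟨i, -, hi⟩ := Finset.exists_min_image Finset.univ (fun j => ((a j : ℕ)))
        ⟨0, Finset.mem_univ _⟩
      exact ⟨i, fun j => hi j (Finset.mem_univ j)⟩
    choose idx hidx using hex
    apply Finset.card_le_card_of_injOn
      (fun a => (idx a, fun r => (⟨(a ((idx a).succAbove r) : ℕ) - (a (idx a) : ℕ),
        lt_of_le_of_lt (Nat.sub_le _ _) (a ((idx a).succAbove r)).isLt⟩ : Fin n)))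
      (fun a _ => Finset.mem_univ _)
    intro a ha a' ha' hFa
    simp only [Finset.mem_coe, Finset.mem_filter, hP] at ha ha'
    obtain ⟨haS, hamin⟩ := ha
    obtain ⟨ha'S, ha'min⟩ := ha'
    have hidx_eq : idx a = idx a' := congrArg Prod.fst hFa
    have hsnd := congrArg Prod.snd hFa
    simp only at hsnd
    have hdiff : ∀ j : Fin (m + 1),
        (a j : ℕ) - (a (idx a) : ℕ) = (a' j : ℕ) - (a' (idx a') : ℕ) := by
      intro j
      rcases eq_or_ne j (idx a) with rfl | hne
      · rw [Nat.sub_self, hidx_eq, Nat.sub_self]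
      · obtain ⟨r, hr⟩ := Fin.exists_succAbove_eq hne
        have := congrFun hsnd r
        have hval := congrArg Fin.val this
        simp only at hval
        rw [← hidx_eq] at hval
        subst hr
        rw [← hidx_eq]
        exact hval
    rcases lt_trichotomy ((a (idx a)) : ℕ) ((a' (idx a')) : ℕ) with hlt | heq | hgt
    · exfalso
      apply ha'min
      refine ⟨a, haS, fun i => ?_⟩
      have h1 := hdiff i
      have h2 := hidx a i
      have h3 := hidx a' i
      exact Fin.lt_def.mpr (by omega)
    · funext j
      have h1 := hdiff j
      have h2 := hidx a j
      have h3 := hidx a' j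
      exact Fin.ext (by omega)
    · exfalso
      apply hamin
      refine ⟨a', ha'S, fun i => ?_⟩
      have h1 := hdiff i
      have h2 := hidx a i
      have h3 := hidx a' i
      exact Fin.lt_def.mpr (by omega)
  have htot : S.card ≤ (m + 2) * n ^ m := by
    have : (S.filter P).card + (S.filter fun a => ¬ P a).card = S.card := hsplit
    have hmul : (m + 2) * n ^ m = n ^ m + (m + 1) * n ^ m := by ring
    omega
  have hfin : (m + 2) * n ^ m ≤ 3 * m * n ^ m :=
    Nat.mul_le_mul_right _ (by omega)
  have : m + 1 - 1 = m := by omega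
  rw [this]
  exact le_trans htot hfin
end

section
/- For every k ≥ 1 there exists a constant C > 0 such that for every n ≥ 1 there exists A ∈ L_n^k in which every monotone subsequence has length at most C·√n. -/
open scoped Classical

namespace HDUpperAux

/-- A prime `s` with `√n < s ≤ 4√n` not dividing `n`. -/
lemma exists_good_prime (n : ℕ) (hn : 1 ≤ n) :
    ∃ s : ℕ, s.Prime ∧ ¬ s ∣ n ∧ Nat.sqrt n < s ∧ s ≤ 4 * Nat.sqrt n := by
  set t := Nat.sqrt n with ht
  have ht1 : 1 ≤ t := Nat.sqrt_pos.mpr hn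
  obtain ⟨p, hp, hpl, hpu⟩ := Nat.exists_prime_lt_and_le_two_mul t (by omega)
  obtain ⟨q, hq, hql, hqu⟩ := Nat.exists_prime_lt_and_le_two_mul (2 * t) (by omega)
  by_cases hpd : p ∣ n
  · refine ⟨q, hq, ?_, by omega, by omega⟩
    intro hqd
    have hpq : p ≠ q := by omega
    have hco : Nat.Coprime p q := (Nat.coprime_primes hp hq).mpr hpq
    have hdvd : p * q ∣ n := hco.mul_dvd_of_dvd_of_dvd hpd hqd
    have hle : p * q ≤ n := Nat.le_of_dvd (by omega) hdvd
    have h1 : n < (t + 1) * (t + 1) := Nat.lt_succ_sqrt n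
    have h2 : (t + 1) * (t + 1) ≤ (t + 1) * (2 * t + 1) :=
      Nat.mul_le_mul_left _ (by omega)
    have h3 : (t + 1) * (2 * t + 1) ≤ p * q :=
      Nat.mul_le_mul (by omega) (by omega)
    omega
  · exact ⟨p, hp, hpd, hpl, by omega⟩


section Construction
variable {n k s : ℕ}

noncomputable def coeff (n k s : ℕ) (hk : 0 < k) : Fin k → ZMod n :=
  fun j => if j = (⟨0, hk⟩ : Fin k) then (s : ZMod n) else 1

noncomputable def lsum (n k s : ℕ) (hk : 0 < k) (x : Fin (k + 1) → Fin n) : ZMod n :=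
  ∑ j : Fin k, coeff n k s hk j * (((x j.castSucc).val : ℕ) : ZMod n)

noncomputable def goodPerm (n k s : ℕ) (hk : 0 < k) : (Fin (k + 1) → Fin n) → Bool :=
  fun x => decide (lsum n k s hk x = (((x (Fin.last k)).val : ℕ) : ZMod n))

lemma goodPerm_eq_true_iff (hk : 0 < k) (x : Fin (k + 1) → Fin n) :
    goodPerm n k s hk x = true ↔
      lsum n k s hk x = (((x (Fin.last k)).val : ℕ) : ZMod n) := by
  simp [goodPerm]

lemma coeff_isUnit (hk : 0 < k) (hsp : s.Prime) (hsd : ¬ s ∣ n) (j : Fin k) :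
    IsUnit (coeff n k s hk j) := by
  unfold coeff
  split
  · exact (ZMod.isUnit_prime_iff_not_dvd hsp).mpr hsd
  · exact isUnit_one

lemma existsUnique_fin_mul (hn : 0 < n) (u v : ZMod n) (hu : IsUnit u) :
    ∃! t : Fin n, u * ((t.val : ℕ) : ZMod n) = v := by
  haveI : NeZero n := ⟨hn.ne'⟩
  refine ⟨⟨(((hu.unit⁻¹ : (ZMod n)ˣ) : ZMod n) * v).val, ZMod.val_lt _⟩, ?_, ?_⟩
  · show u * ((((((hu.unit⁻¹ : (ZMod n)ˣ) : ZMod n) * v).val : ℕ)) : ZMod n) = v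
    rw [ZMod.natCast_rightInverse _]
    calc u * (((hu.unit⁻¹ : (ZMod n)ˣ) : ZMod n) * v)
        = (hu.unit : ZMod n) * (((hu.unit⁻¹ : (ZMod n)ˣ) : ZMod n) * v) := by
          rw [hu.unit_spec]
      _ = v := Units.mul_inv_cancel_left _ _
  · intro t ht
    have h0 : u * ((t.val : ℕ) : ZMod n)
        = u * ((((((hu.unit⁻¹ : (ZMod n)ˣ) : ZMod n) * v).val : ℕ)) : ZMod n) := by
      rw [ht, ZMod.natCast_rightInverse _]
      calc v = (hu.unit : ZMod n) * (((hu.unit⁻¹ : (ZMod n)ˣ) : ZMod n) * v) :=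
            (Units.mul_inv_cancel_left _ _).symm
        _ = u * (((hu.unit⁻¹ : (ZMod n)ˣ) : ZMod n) * v) := by rw [hu.unit_spec]
    have h1 := hu.mul_left_cancel h0
    have h2 := congrArg ZMod.val h1
    rw [ZMod.val_cast_of_lt t.isLt, ZMod.val_cast_of_lt (ZMod.val_lt _)] at h2
    exact Fin.ext h2

lemma goodPerm_isHDPerm (hk : 0 < k) (hn : 0 < n) (hsp : s.Prime) (hsd : ¬ s ∣ n) :
    ∀ (j : Fin (k + 1)) (x : Fin (k + 1) → Fin n),
      ∃! t : Fin n, goodPerm n k s hk (Function.update x j t) = true := by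
  haveI : NeZero n := ⟨hn.ne'⟩
  intro j x
  rcases Fin.eq_castSucc_or_eq_last j with ⟨i, rfl⟩ | rfl
  · -- an input coordinate
    have hout : ∀ t : Fin n,
        Function.update x i.castSucc t (Fin.last k) = x (Fin.last k) := fun t =>
      Function.update_of_ne (Fin.castSucc_lt_last i).ne' t x
    have key : ∀ t : Fin n,
        lsum n k s hk (Function.update x i.castSucc t)
          = coeff n k s hk i * ((t.val : ℕ) : ZMod n)
            + ∑ j ∈ Finset.univ.erase i,
                coeff n k s hk j * (((x j.castSucc).val : ℕ) : ZMod n) := by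
      intro t
      unfold lsum
      have hfun : (fun j : Fin k =>
            coeff n k s hk j * (((Function.update x i.castSucc t j.castSucc).val : ℕ) : ZMod n))
          = Function.update
              (fun j : Fin k => coeff n k s hk j * (((x j.castSucc).val : ℕ) : ZMod n)) i
              (coeff n k s hk i * ((t.val : ℕ) : ZMod n)) := by
        funext j
        rcases eq_or_ne j i with rfl | hne
        · simp
        · rw [Function.update_of_ne hne,
            Function.update_of_ne (fun h => hne (Fin.castSucc_injective _ h))]
      rw [hfun, Finset.sum_update_of_mem (Finset.mem_univ i)]
      rw [Finset.sdiff_singleton_eq_erase]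
    simp only [goodPerm_eq_true_iff, key, hout]
    have h := existsUnique_fin_mul hn (coeff n k s hk i)
      ((((x (Fin.last k)).val : ℕ) : ZMod n)
        - ∑ j ∈ Finset.univ.erase i,
            coeff n k s hk j * (((x j.castSucc).val : ℕ) : ZMod n))
      (coeff_isUnit hk hsp hsd i)
    refine (existsUnique_congr fun t => ?_).mp h
    constructor
    · intro ht; rw [ht]; ring
    · intro ht
      have := ht
      rw [← this]; ring
  · -- the output coordinate
    have hsum : ∀ t : Fin n,
        lsum n k s hk (Function.update x (Fin.last k) t) = lsum n k s hk x := by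
      intro t
      unfold lsum
      refine Finset.sum_congr rfl fun j _ => ?_
      rw [Function.update_of_ne (Fin.castSucc_lt_last j).ne]
    simp only [goodPerm_eq_true_iff, hsum, Function.update_self]
    have h := existsUnique_fin_mul hn 1 (lsum n k s hk x) isUnit_one
    refine (existsUnique_congr fun t => ?_).mp h
    rw [one_mul, eq_comm]

set_option maxHeartbeats 1000000 in
lemma chain_bound (hk : 0 < k) (hn : 0 < n) (hs0 : 0 < s) (hs1 : Nat.sqrt n < s)
    (m : ℕ) (α : Fin m → Fin (k + 1) → Fin n)
    (hA : ∀ l, goodPerm n k s hk (α l) = true)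
    (hmono : ∀ j : Fin (k + 1),
      StrictMono (fun l => α l j) ∨ StrictAnti (fun l => α l j)) :
    (m - 1) * (n / (2 * s)) ≤ (k + 1) * (n - 1) := by
  rcases m with _ | m
  · simp
  rcases m with _ | M
  · simp
  set T : ℕ := n / (2 * s) with hTdef
  -- basic numeric facts
  have hns : n < s * s := Nat.sqrt_lt.mp hs1
  have hTs : T ≤ s := by
    have h1 : n ≤ 2 * s * s := by nlinarith
    calc T = n / (2 * s) := rfl
      _ ≤ (2 * s * s) / (2 * s) := Nat.div_le_div_right h1
      _ = s := Nat.mul_div_cancel_left s (by omega)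
  have hT2n : 2 * s * T ≤ n := by
    rw [hTdef, mul_comm]
    exact Nat.div_mul_le_self n (2 * s)
  set i0 : Fin k := ⟨0, hk⟩ with hi0
  -- integer coordinates
  set g : Fin (k + 1) → ℕ → ℤ :=
    fun i t => if h : t < M + 2 then ((α ⟨t, h⟩ i).val : ℤ) else 0 with hgdef
  have hgeq : ∀ (i : Fin (k + 1)) (t : ℕ) (ht : t < M + 2),
      g i t = ((α ⟨t, ht⟩ i).val : ℤ) := by
    intro i t ht
    simp only [hgdef]
    rw [dif_pos ht]
  -- the linear functional
  set F : Fin (M + 2) → ℤ := fun l =>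
    (s : ℤ) * ((α l i0.castSucc).val : ℤ)
      + ∑ j ∈ Finset.univ.erase i0, ((α l j.castSucc).val : ℤ)
      - ((α l (Fin.last k)).val : ℤ) with hFdef
  have hdvd : ∀ l, (n : ℤ) ∣ F l := by
    intro l
    rw [← ZMod.intCast_zmod_eq_zero_iff_dvd]
    have h := (goodPerm_eq_true_iff hk (α l)).mp (hA l)
    unfold lsum at h
    rw [← Finset.add_sum_erase _ _ (Finset.mem_univ i0)] at h
    have hc0 : coeff n k s hk i0 = (s : ZMod n) := if_pos rfl
    have hc1 : ∀ j ∈ Finset.univ.erase i0,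
        coeff n k s hk j * (((α l j.castSucc).val : ℕ) : ZMod n)
          = (((α l j.castSucc).val : ℕ) : ZMod n) := by
      intro j hj
      rw [coeff, if_neg (Finset.ne_of_mem_erase hj), one_mul]
    rw [hc0, Finset.sum_congr rfl hc1] at h
    simp only [hFdef]
    push_cast
    linear_combination h
  -- step lemma
  have step : ∀ t, t < M + 1 → (T : ℤ) ≤ ∑ i : Fin (k + 1), |g i (t + 1) - g i t| := by
    intro t ht
    by_contra hcon
    push_neg at hcon
    set l1 : Fin (M + 2) := ⟨t, by omega⟩ with hl1
    set l2 : Fin (M + 2) := ⟨t + 1, by omega⟩ with hl2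
    set D : Fin (k + 1) → ℤ :=
      fun i => ((α l2 i).val : ℤ) - ((α l1 i).val : ℤ) with hDdef
    have hDg : ∀ i, g i (t + 1) - g i t = D i := by
      intro i
      rw [hgeq i (t + 1) (by omega), hgeq i t (by omega)]
    have hsumlt : ∑ i : Fin (k + 1), |D i| ≤ (T : ℤ) - 1 := by
      have h5 : ∑ i : Fin (k + 1), |D i| < (T : ℤ) := by
        calc ∑ i : Fin (k + 1), |D i|
            = ∑ i : Fin (k + 1), |g i (t + 1) - g i t| :=
              Finset.sum_congr rfl fun i _ => by rw [hDg i]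
          _ < (T : ℤ) := hcon
      omega
    -- divisibility of the step combination
    set R : ℤ := ∑ j ∈ Finset.univ.erase i0, D j.castSucc - D (Fin.last k) with hRdef
    have hz : (n : ℤ) ∣ ((s : ℤ) * D i0.castSucc + R) := by
      have h2 := dvd_sub (hdvd l2) (hdvd l1)
      have h3 : F l2 - F l1 = (s : ℤ) * D i0.castSucc + R := by
        simp only [hFdef, hRdef, hDdef, Finset.sum_sub_distrib]
        ring
      rwa [h3] at h2
    -- size bounds
    have hlt12 : l1 < l2 := by simp [hl1, hl2, Fin.mk_lt_mk]
    have hD0ne : D i0.castSucc ≠ 0 := by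
      have hne : α l1 i0.castSucc ≠ α l2 i0.castSucc := by
        rcases hmono i0.castSucc with hmon | hant
        · exact (hmon hlt12).ne
        · exact (hant hlt12).ne'
      simp only [hDdef, sub_ne_zero]
      intro h
      refine hne (Fin.ext ?_)
      exact_mod_cast h.symm
    have hD0one : 1 ≤ |D i0.castSucc| := Int.one_le_abs hD0ne
    have hsplit : ∑ i : Fin (k + 1), |D i|
        = (|D i0.castSucc| + ∑ j ∈ Finset.univ.erase i0, |D j.castSucc|)
          + |D (Fin.last k)| := by
      rw [Fin.sum_univ_castSucc (f := fun i => |D i|),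
        ← Finset.add_sum_erase _ _ (Finset.mem_univ i0)]
    rw [hsplit] at hsumlt
    have hRbound : |R| ≤ ∑ j ∈ Finset.univ.erase i0, |D j.castSucc| + |D (Fin.last k)| := by
      have h6 : |∑ j ∈ Finset.univ.erase i0, D j.castSucc|
          ≤ ∑ j ∈ Finset.univ.erase i0, |D j.castSucc| :=
        Finset.abs_sum_le_sum_abs _ _
      calc |R| = |∑ j ∈ Finset.univ.erase i0, D j.castSucc + -(D (Fin.last k))| := by
            rw [hRdef, sub_eq_add_neg]
        _ ≤ |∑ j ∈ Finset.univ.erase i0, D j.castSucc| + |-(D (Fin.last k))| := abs_add_le _ _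
        _ = |∑ j ∈ Finset.univ.erase i0, D j.castSucc| + |D (Fin.last k)| := by rw [abs_neg]
        _ ≤ _ := by linarith
    have hD0T : |D i0.castSucc| ≤ (T:ℤ) - 1 := by
      have h1 : (0:ℤ) ≤ ∑ j ∈ Finset.univ.erase i0, |D j.castSucc| :=
        Finset.sum_nonneg fun j _ => abs_nonneg _
      have h2 : (0:ℤ) ≤ |D (Fin.last k)| := abs_nonneg _
      linarith
    have hRT : |R| + |D i0.castSucc| ≤ (T:ℤ) - 1 := by linarith
    set Z : ℤ := (s : ℤ) * D i0.castSucc + R with hZdef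
    have hsc : (0:ℤ) ≤ (s:ℤ) := by positivity
    have hZabs_low : (s:ℤ) * |D i0.castSucc| - |R| ≤ |Z| := by
      have h7 := abs_sub_abs_le_abs_sub ((s:ℤ) * D i0.castSucc) (-R)
      simp only [abs_neg, sub_neg_eq_add] at h7
      calc (s:ℤ) * |D i0.castSucc| - |R| = |(s:ℤ) * D i0.castSucc| - |R| := by
            rw [abs_mul, abs_of_nonneg hsc]
        _ ≤ |Z| := h7
    have hs1' : (1:ℤ) ≤ (s:ℤ) := by exact_mod_cast hs0
    have hTs' : (T:ℤ) ≤ (s:ℤ) := by exact_mod_cast hTs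
    have hZne : Z ≠ 0 := by
      intro h0
      rw [h0, abs_zero] at hZabs_low
      nlinarith [hD0one, hRT]
    have hZlt : |Z| < (n : ℤ) := by
      have h1 : |Z| ≤ (s:ℤ) * |D i0.castSucc| + |R| := by
        calc |Z| ≤ |(s:ℤ) * D i0.castSucc| + |R| := abs_add_le _ _
          _ = (s:ℤ) * |D i0.castSucc| + |R| := by rw [abs_mul, abs_of_nonneg hsc]
      have h2n : 2 * (s:ℤ) * (T:ℤ) ≤ (n:ℤ) := by exact_mod_cast hT2n
      have hR0 : (0:ℤ) ≤ |R| := abs_nonneg _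
      nlinarith [hD0T, hRT, hD0one]
    have hge := Int.le_of_dvd (abs_pos.mpr hZne) ((dvd_abs _ _).mpr hz)
    omega
  -- telescoping bound for each coordinate
  have tel : ∀ i : Fin (k + 1),
      ∑ t ∈ Finset.range (M + 1), |g i (t + 1) - g i t| ≤ (n : ℤ) - 1 := by
    intro i
    have hub : ∀ t, g i t ≤ (n:ℤ) - 1 := by
      intro t
      simp only [hgdef]
      split
      · rename_i h
        have := (α ⟨t, h⟩ i).isLt
        omega
      · omega
    have hlb : ∀ t, (0:ℤ) ≤ g i t := by
      intro t
      simp only [hgdef]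
      split
      · exact Int.natCast_nonneg _
      · exact le_refl 0
    rcases hmono i with hmon | hant
    · have habs : ∀ t ∈ Finset.range (M + 1), |g i (t + 1) - g i t|
          = g i (t + 1) - g i t := by
        intro t ht
        rw [Finset.mem_range] at ht
        apply abs_of_nonneg
        rw [hgeq i (t + 1) (by omega), hgeq i t (by omega)]
        have hle : (⟨t, by omega⟩ : Fin (M + 2)) ≤ ⟨t + 1, by omega⟩ := by
          simp [Fin.mk_le_mk]
        have hval : (α ⟨t, by omega⟩ i).val ≤ (α ⟨t + 1, by omega⟩ i).val :=
          hmon.monotone hle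
        omega
      rw [Finset.sum_congr rfl habs, Finset.sum_range_sub (g i)]
      have := hub (M + 1); have := hlb 0; linarith
    · have habs : ∀ t ∈ Finset.range (M + 1), |g i (t + 1) - g i t|
          = (fun u => -(g i u)) (t + 1) - (fun u => -(g i u)) t := by
        intro t ht
        rw [Finset.mem_range] at ht
        simp only
        rw [abs_of_nonpos]
        · ring
        rw [hgeq i (t + 1) (by omega), hgeq i t (by omega)]
        have hlt : (⟨t, by omega⟩ : Fin (M + 2)) < ⟨t + 1, by omega⟩ := by
          simp [Fin.mk_lt_mk]
        have hval : (α ⟨t + 1, by omega⟩ i).val < (α ⟨t, by omega⟩ i).val := hant hlt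
        omega
      rw [Finset.sum_congr rfl habs, Finset.sum_range_sub (fun u => -(g i u))]
      have := hub 0; have := hlb (M + 1); linarith
  -- put everything together
  have main : ((M + 1 : ℕ) : ℤ) * (T : ℤ) ≤ ((k + 1 : ℕ) : ℤ) * ((n : ℤ) - 1) := by
    calc ((M + 1 : ℕ) : ℤ) * (T : ℤ)
        = ∑ _t ∈ Finset.range (M + 1), (T : ℤ) := by
          rw [Finset.sum_const, Finset.card_range, nsmul_eq_mul]
      _ ≤ ∑ t ∈ Finset.range (M + 1), ∑ i : Fin (k + 1), |g i (t + 1) - g i t| :=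
          Finset.sum_le_sum fun t ht => step t (Finset.mem_range.mp ht)
      _ = ∑ i : Fin (k + 1), ∑ t ∈ Finset.range (M + 1), |g i (t + 1) - g i t| :=
          Finset.sum_comm
      _ ≤ ∑ _i : Fin (k + 1), ((n : ℤ) - 1) := Finset.sum_le_sum fun i _ => tel i
      _ = ((k + 1 : ℕ) : ℤ) * ((n : ℤ) - 1) := by
          rw [Finset.sum_const, Finset.card_univ, Fintype.card_fin, nsmul_eq_mul]
  have hfin : (M + 1) * T ≤ (k + 1) * (n - 1) := by
    have h1 : ((n : ℤ) - 1) = ((n - 1 : ℕ) : ℤ) := by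
      have h2 : 1 ≤ n := hn
      push_cast [Nat.cast_sub h2]
      ring
    rw [h1] at main
    exact_mod_cast main
  simpa using hfin

end Construction

end HDUpperAux

set_option maxHeartbeats 1000000 in
/-- For every `k ≥ 1` there is a constant `C > 0` such that for every `n ≥ 1`
some `A ∈ L_n^k` has all its monotone subsequences of length at most `C √n`. -/
theorem hd_erdos_szekeres_upper (k : ℕ) (hk : 1 ≤ k) :
    ∃ C : ℝ, 0 < C ∧ ∀ n : ℕ, 1 ≤ n →
      ∃ A : (Fin (k + 1) → Fin n) → Bool, IsHDPerm n k A ∧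
        ∀ (m : ℕ) (α : Fin m → (Fin (k + 1) → Fin n)),
          IsMonoSub n k m A α → (m : ℝ) ≤ C * Real.sqrt n := by
  have hk0 : 0 < k := hk
  refine ⟨64 * (k + 1), by positivity, ?_⟩
  intro n hn
  obtain ⟨s, hsp, hsd, hs1, hs2⟩ := HDUpperAux.exists_good_prime n hn
  refine ⟨HDUpperAux.goodPerm n k s hk0, HDUpperAux.goodPerm_isHDPerm hk0 hn hsp hsd, ?_⟩
  intro m α hms
  obtain ⟨hA, hmono⟩ := hms
  have hn0R : (0:ℝ) < n := by exact_mod_cast hn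
  have hsqrt_pos : 0 < Real.sqrt n := Real.sqrt_pos.mpr hn0R
  have hsq : Real.sqrt n * Real.sqrt n = n := Real.mul_self_sqrt hn0R.le
  have hk1R : (1:ℝ) ≤ (k:ℝ) := by exact_mod_cast hk
  have hsqrt256 : Real.sqrt 256 = 16 := by
    rw [show (256:ℝ) = 16 ^ 2 by norm_num, Real.sqrt_sq (by norm_num : (0:ℝ) ≤ 16)]
  by_cases hbig : n < 256
  · -- small case: m ≤ n ≤ 16 √n
    have hmn : m ≤ n := by
      have hinj : Function.Injective (fun l : Fin m => α l 0) := by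
        rcases hmono 0 with h | h
        · exact h.injective
        · exact h.injective
      simpa using Fintype.card_le_of_injective _ hinj
    have h16 : Real.sqrt n ≤ 16 := by
      rw [← hsqrt256]
      exact Real.sqrt_le_sqrt (by exact_mod_cast hbig.le)
    have hmR : (m:ℝ) ≤ n := by exact_mod_cast hmn
    calc (m:ℝ) ≤ n := hmR
      _ = Real.sqrt n * Real.sqrt n := hsq.symm
      _ ≤ 16 * Real.sqrt n := by nlinarith
      _ ≤ 64 * (k + 1) * Real.sqrt n := by nlinarith
  · push_neg at hbig
    have h16 : (16:ℝ) ≤ Real.sqrt n := by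
      rw [← hsqrt256]
      exact Real.sqrt_le_sqrt (by exact_mod_cast hbig)
    rcases Nat.eq_zero_or_pos m with rfl | hm1
    · simp
      positivity
    -- the chain bound
    have hchain := HDUpperAux.chain_bound hk0 (by omega) hsp.pos hs1 m α hA hmono
    set T : ℕ := n / (2 * s) with hTdef
    have hsR : (0:ℝ) < s := by exact_mod_cast hsp.pos
    have hnsqrtR : (Nat.sqrt n : ℝ) ≤ Real.sqrt n := by
      have h1 : ((Nat.sqrt n : ℝ)) ^ 2 ≤ (n:ℝ) := by exact_mod_cast Nat.sqrt_le' n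
      have h2 := Real.sqrt_le_sqrt h1
      rwa [Real.sqrt_sq (by positivity : (0:ℝ) ≤ (Nat.sqrt n : ℝ))] at h2
    have hsle : (s:ℝ) ≤ 4 * Real.sqrt n := by
      calc (s:ℝ) ≤ 4 * (Nat.sqrt n : ℝ) := by exact_mod_cast hs2
        _ ≤ 4 * Real.sqrt n := by linarith
    -- n < 2s(T+1)
    have hdivR : (n:ℝ) < 2 * s * (T + 1) := by
      have hmod := Nat.div_add_mod n (2 * s)
      have hmlt : n % (2 * s) < 2 * s := Nat.mod_lt _ (by have := hsp.pos; omega)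
      have h9 : n < 2 * s * (T + 1) := by
        calc n = 2 * s * T + n % (2 * s) := (Nat.div_add_mod n (2 * s)).symm
          _ < 2 * s * T + 2 * s := Nat.add_lt_add_left hmlt _
          _ = 2 * s * (T + 1) := by ring
      exact_mod_cast h9
    clear_value T
    have h4s : 4 * (s:ℝ) ≤ n := by nlinarith
    have hTreal : Real.sqrt n / 16 ≤ (T:ℝ) := by
      have hT0 : (0:ℝ) ≤ (T:ℝ) := by positivity
      have h1 : (n:ℝ) < 4 * ((s:ℝ) * T) := by nlinarith [hdivR, h4s]
      have h2 : (s:ℝ) * T ≤ 4 * Real.sqrt n * T := mul_le_mul_of_nonneg_right hsle hT0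
      have h3 : Real.sqrt n * Real.sqrt n < Real.sqrt n * (16 * T) := by
        rw [hsq]; nlinarith
      have h5 := lt_of_mul_lt_mul_left h3 hsqrt_pos.le
      linarith
    -- real version of the chain bound
    have hmR1 : (1:ℝ) ≤ (m:ℝ) := by exact_mod_cast hm1
    have hchainR : ((m:ℝ) - 1) * T ≤ ((k:ℝ) + 1) * n := by
      have h1 : ((m - 1 : ℕ):ℝ) * ((T:ℕ):ℝ) ≤ (((k+1) * (n-1) : ℕ) : ℝ) := by
        exact_mod_cast hchain
      have h2 : ((m - 1 : ℕ):ℝ) = (m:ℝ) - 1 := by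
        have : 1 ≤ m := hm1
        push_cast [Nat.cast_sub this]
        ring
      have h3 : (((k+1) * (n-1) : ℕ) : ℝ) ≤ ((k:ℝ) + 1) * n := by
        have h4 : (n - 1 : ℕ) ≤ n := by omega
        have h5 : (((k+1) * (n-1) : ℕ) : ℝ) = ((k:ℝ)+1) * ((n-1:ℕ):ℝ) := by push_cast; ring
        have h6 : ((n-1:ℕ):ℝ) ≤ (n:ℝ) := by exact_mod_cast h4
        rw [h5]
        have : (0:ℝ) ≤ (k:ℝ) + 1 := by positivity
        nlinarith
      rw [h2] at h1
      exact h1.trans h3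
    -- finish
    have hstep1 : ((m:ℝ) - 1) * (Real.sqrt n / 16) ≤ ((k:ℝ) + 1) * n := by
      have e1 : ((m:ℝ) - 1) * (Real.sqrt n / 16) ≤ ((m:ℝ) - 1) * (T:ℝ) :=
        mul_le_mul_of_nonneg_left hTreal (by linarith)
      linarith
    have hstep2 : ((m:ℝ) - 1) * Real.sqrt n ≤ (16 * ((k:ℝ) + 1) * Real.sqrt n) * Real.sqrt n := by
      have e2 : (16 * ((k:ℝ) + 1) * Real.sqrt n) * Real.sqrt n
          = 16 * (((k:ℝ) + 1) * (Real.sqrt n * Real.sqrt n)) := by ring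
      rw [e2, hsq]
      linarith
    have hstep3 : (m:ℝ) - 1 ≤ 16 * ((k:ℝ) + 1) * Real.sqrt n :=
      le_of_mul_le_mul_right hstep2 hsqrt_pos
    have hfinal : 16 * ((k:ℝ) + 1) * Real.sqrt n + 1 ≤ 64 * ((k:ℝ) + 1) * Real.sqrt n := by
      have e3 : (2:ℝ) * 16 ≤ ((k:ℝ) + 1) * Real.sqrt n :=
        mul_le_mul (by linarith) h16 (by norm_num) (by linarith)
      nlinarith
    linarith
end

section
/- Let k ≥ 1 and let n be a prime with n ≥ k+1, and set M = ⌊√(n/(k+1))⌋. Define A : [n]^{k+1} → {0,1} by A(α_1,…,α_{k+1}) = 1 if and only if M·(α_1 + α_2 + … + α_k) + α_{k+1} ≡ 0 (mod n). Then A is an order-n k-dimensional permutation, and every monotone subsequence of A has length strictly less than (k+1)·M + n/M + 1. -/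
open scoped Classical

lemma uniq_sol (n : ℕ) (hp : n.Prime) (a C : ZMod n) (ha : a ≠ 0) :
    ∃! t : Fin n, a * (((t : ℕ) : ZMod n) + 1) + C = 0 := by
  haveI := Fact.mk hp
  set x : ZMod n := a⁻¹ * (-C) - 1 with hx
  haveI : NeZero n := ⟨hp.ne_zero⟩
  refine ⟨⟨x.val, x.val_lt⟩, ?_, ?_⟩
  · show a * (((x.val : ℕ) : ZMod n) + 1) + C = 0
    rw [ZMod.natCast_val, ZMod.cast_id, hx]
    field_simp
    ring
  · rintro t ht
    have h1 : ((t : ℕ) : ZMod n) + 1 = a⁻¹ * (-C) := by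
      field_simp at ht ⊢
      linear_combination ht
    have h2 : ((t : ℕ) : ZMod n) = x := by rw [hx]; linear_combination h1
    apply Fin.ext
    have := ZMod.val_cast_of_lt t.isLt
    rw [h2] at this
    simpa using this.symm


lemma hd_part1 (n k M : ℕ) (hn : n.Prime) (hM0 : 0 < M) (hMn : M < n)
    (A : (Fin (k + 1) → Fin n) → Bool)
    (hA : ∀ α : Fin (k + 1) → Fin n,
      A α = decide ((M * (∑ i : Fin k, ((α i.castSucc : ℕ) + 1))
        + ((α (Fin.last k) : ℕ) + 1)) % n = 0)) :
    IsHDPerm n k A := by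
  haveI := Fact.mk hn
  haveI : NeZero n := ⟨hn.ne_zero⟩
  have hcond : ∀ y : Fin (k + 1) → Fin n, (A y = true ↔
      (M : ZMod n) * (∑ i : Fin k, (((y i.castSucc : ℕ) : ZMod n) + 1))
        + (((y (Fin.last k) : ℕ) : ZMod n) + 1) = 0) := by
    intro y
    rw [hA, decide_eq_true_iff, ← Nat.dvd_iff_mod_eq_zero,
      ← ZMod.natCast_eq_zero_iff]
    push_cast
    rfl
  have hMz : ((M : ℕ) : ZMod n) ≠ 0 := by
    rw [Ne, ZMod.natCast_eq_zero_iff]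
    intro h
    exact absurd (Nat.le_of_dvd hM0 h) (not_le.mpr hMn)
  intro j x
  induction j using Fin.lastCases with
  | last =>
    refine (existsUnique_congr fun t => ?_).mpr
      (uniq_sol n hn 1 ((M : ZMod n) * (∑ i : Fin k, (((x i.castSucc : ℕ) : ZMod n) + 1)))
        one_ne_zero)
    rw [hcond]
    have h1 : ∀ i : Fin k, Function.update x (Fin.last k) t i.castSucc = x i.castSucc := by
      intro i
      exact Function.update_of_ne (Fin.castSucc_lt_last i).ne _ _
    have h2 : Function.update x (Fin.last k) t (Fin.last k) = t := Function.update_self _ _ _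
    simp only [h1, h2]
    constructor <;> intro h <;> linear_combination h
  | cast i0 =>
    refine (existsUnique_congr fun t => ?_).mpr
      (uniq_sol n hn (M : ZMod n)
        ((M : ZMod n) * (∑ i ∈ Finset.univ.erase i0, (((x i.castSucc : ℕ) : ZMod n) + 1))
          + (((x (Fin.last k) : ℕ) : ZMod n) + 1)) hMz)
    rw [hcond]
    have h2 : Function.update x i0.castSucc t (Fin.last k) = x (Fin.last k) :=
      Function.update_of_ne (Fin.castSucc_lt_last i0).ne' _ _
    have h1 : (∑ i : Fin k, (((Function.update x i0.castSucc t i.castSucc : ℕ) : ZMod n) + 1))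
        = (((t : ℕ) : ZMod n) + 1)
          + ∑ i ∈ Finset.univ.erase i0, (((x i.castSucc : ℕ) : ZMod n) + 1) := by
      rw [← Finset.add_sum_erase _ _ (Finset.mem_univ i0)]
      congr 1
      · rw [Function.update_self]
      · apply Finset.sum_congr rfl
        intro i hi
        rw [Function.update_of_ne]
        exact fun h => (Finset.mem_erase.mp hi).1 (Fin.castSucc_injective k h)
    rw [h1, h2]
    constructor <;> intro h <;> linear_combination h

lemma part2 (n k M : ℕ) (hk : 1 ≤ k) (hn2 : 2 ≤ n) (hM1 : 1 ≤ M)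
    (A : (Fin (k + 1) → Fin n) → Bool)
    (hA : ∀ α : Fin (k + 1) → Fin n,
      A α = decide ((M * (∑ i : Fin k, ((α i.castSucc : ℕ) + 1))
        + ((α (Fin.last k) : ℕ) + 1)) % n = 0))
    (m : ℕ) (α : Fin m → (Fin (k + 1) → Fin n)) (h : IsMonoSub n k m A α) :
    (m : ℝ) < ((k : ℝ) + 1) * M + (n : ℝ) / (M : ℝ) + 1 := by
  obtain ⟨hsupp, hmono⟩ := h
  have hMR : (1:ℝ) ≤ (M:ℝ) := by exact_mod_cast hM1
  have hM0R : (0:ℝ) < (M:ℝ) := by linarith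
  have hn0R : (0:ℝ) < (n:ℝ) := by
    have : (2:ℝ) ≤ (n:ℝ) := by exact_mod_cast hn2
    linarith
  have hkR : (1:ℝ) ≤ (k:ℝ) := by exact_mod_cast hk
  by_cases hm : m ≤ 1
  · have h1 : (m:ℝ) ≤ 1 := by exact_mod_cast hm
    have h4 : 0 < (n:ℝ)/(M:ℝ) := div_pos hn0R hM0R
    nlinarith
  push_neg at hm
  set p := m - 1 with hpdef
  have hpm : p + 1 = m := by omega
  set idx : ℕ → Fin m := fun i => ⟨min i p, by omega⟩ with hidx
  set g : Fin (k+1) → ℕ → ℤ := fun j i => ((α (idx i) j : ℕ) : ℤ) with hg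
  have hidxlt : ∀ i, i < p → idx i < idx (i+1) := by
    intro i hi
    simp only [hidx, Fin.mk_lt_mk]
    omega
  set s : Fin (k+1) → ℤ := fun j => if StrictMono (fun i => α i j) then 1 else -1 with hs
  have hscases : ∀ j, s j = 1 ∨ s j = -1 := by
    intro j; simp only [hs]; split <;> simp
  set d : Fin (k+1) → ℕ → ℤ := fun j i => s j * (g j (i+1) - g j i) with hd
  have hd1 : ∀ j, ∀ i, i < p → 1 ≤ d j i := by
    intro j i hi
    have hlt := hidxlt i hi
    simp only [hd, hs, hg]
    split
    · next hsm =>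
      have h1 : (α (idx i) j : ℕ) < (α (idx (i+1)) j : ℕ) := hsm hlt
      have h2 : ((α (idx i) j : ℕ) : ℤ) < ((α (idx (i+1)) j : ℕ) : ℤ) := by exact_mod_cast h1
      linarith
    · next hns =>
      have hanti := (hmono j).resolve_left hns
      have h1 : (α (idx (i+1)) j : ℕ) < (α (idx i) j : ℕ) := hanti hlt
      have h2 : ((α (idx (i+1)) j : ℕ) : ℤ) < ((α (idx i) j : ℕ) : ℤ) := by exact_mod_cast h1
      linarith
  have hgub : ∀ j i, g j i ≤ (n:ℤ) - 1 := by
    intro j i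
    have h1 : ((α (idx i) j : ℕ) : ℤ) < (n:ℤ) := by exact_mod_cast (α (idx i) j).isLt
    simp only [hg]; linarith
  have hglb : ∀ j i, 0 ≤ g j i := by
    intro j i; simp only [hg]; positivity
  have htel : ∀ j, ∑ i ∈ Finset.range p, d j i ≤ (n:ℤ) - 1 := by
    intro j
    have h1 : ∑ i ∈ Finset.range p, d j i = s j * (g j p - g j 0) := by
      simp only [hd]
      rw [← Finset.mul_sum, Finset.sum_range_sub]
    rw [h1]
    rcases hscases j with hc | hc <;> rw [hc] <;>
      [skip; skip] <;> [linarith [hgub j p, hglb j 0]; linarith [hgub j 0, hglb j p]]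
  set F : ℕ → ℤ :=
    fun i => (M:ℤ) * (∑ j : Fin k, (g j.castSucc i + 1)) + (g (Fin.last k) i + 1) with hF
  have hFdvd : ∀ i, (n:ℤ) ∣ F i := by
    intro i
    have h0 := hsupp (idx i)
    rw [hA, decide_eq_true_iff] at h0
    have h1 : (n:ℤ) ∣ ((M * (∑ jj : Fin k, ((α (idx i) jj.castSucc : ℕ) + 1))
        + ((α (idx i) (Fin.last k) : ℕ) + 1) : ℕ) : ℤ) :=
      Int.natCast_dvd_natCast.mpr (Nat.dvd_of_mod_eq_zero h0)
    have h2 : F i = ((M * (∑ jj : Fin k, ((α (idx i) jj.castSucc : ℕ) + 1))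
        + ((α (idx i) (Fin.last k) : ℕ) + 1) : ℕ) : ℤ) := by
      simp only [hF, hg]; push_cast; ring
    rw [h2]; exact h1
  have hss : ∀ j, s j * s j = 1 := by
    intro j; rcases hscases j with hc | hc <;> rw [hc] <;> norm_num
  have hgd : ∀ j i, g j (i+1) - g j i = s j * d j i := by
    intro j i
    simp only [hd]
    rw [← mul_assoc, hss, one_mul]
  have hDrep : ∀ i, F (i+1) - F i
      = (M:ℤ) * (∑ j : Fin k, s j.castSucc * d j.castSucc i)
        + s (Fin.last k) * d (Fin.last k) i := by
    intro i
    simp only [hF]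
    have h1 : (∑ j : Fin k, (g j.castSucc (i+1) + 1)) - (∑ j : Fin k, (g j.castSucc i + 1))
        = ∑ j : Fin k, s j.castSucc * d j.castSucc i := by
      rw [← Finset.sum_sub_distrib]
      apply Finset.sum_congr rfl
      intro j _
      have := hgd j.castSucc i
      linarith
    have h2 := hgd (Fin.last k) i
    linear_combination (M:ℤ) * h1 + h2
  set D : ℕ → ℤ := fun i => F (i+1) - F i with hD
  have hDdvd : ∀ i, (n:ℤ) ∣ D i := fun i => dvd_sub (hFdvd (i+1)) (hFdvd i)
  set Z := (Finset.range p).filter (fun i => D i = 0) with hZset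
  set NN := (Finset.range p).filter (fun i => ¬ D i = 0) with hNNset
  have hcards : Z.card + NN.card = p := by
    rw [hZset, hNNset, Finset.card_filter_add_card_filter_not, Finset.card_range]
  have hM0Z : (0:ℤ) < (M:ℤ) := by exact_mod_cast Nat.lt_of_lt_of_le Nat.zero_lt_one hM1
  have hZbound : ∀ i ∈ Z, (M:ℤ) ≤ d (Fin.last k) i := by
    intro i hi
    rw [hZset, Finset.mem_filter, Finset.mem_range] at hi
    obtain ⟨hip, hD0⟩ := hi
    have heq : (M:ℤ) * (∑ j : Fin k, s j.castSucc * d j.castSucc i)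
        + s (Fin.last k) * d (Fin.last k) i = 0 := by
      rw [← hDrep]; exact hD0
    set T := ∑ j : Fin k, s j.castSucc * d j.castSucc i with hT
    have hdl := hd1 (Fin.last k) i hip
    rcases hscases (Fin.last k) with hc | hc
    · rw [hc, one_mul] at heq
      have hdu : d (Fin.last k) i = (M:ℤ) * (-T) := by linarith
      have hu : 1 ≤ -T := by
        by_contra hcon
        push_neg at hcon
        have hu0 : -T ≤ 0 := by omega
        have : (M:ℤ) * (-T) ≤ 0 := mul_nonpos_of_nonneg_of_nonpos (le_of_lt hM0Z) hu0
        linarith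
      calc (M:ℤ) = M * 1 := by ring
        _ ≤ M * (-T) := by
            apply mul_le_mul_of_nonneg_left hu (le_of_lt hM0Z)
        _ = d (Fin.last k) i := hdu.symm
    · rw [hc] at heq
      have hdu : d (Fin.last k) i = (M:ℤ) * T := by linarith
      have hu : 1 ≤ T := by
        by_contra hcon
        push_neg at hcon
        have hu0 : T ≤ 0 := by omega
        have : (M:ℤ) * T ≤ 0 := mul_nonpos_of_nonneg_of_nonpos (le_of_lt hM0Z) hu0
        linarith
      calc (M:ℤ) = M * 1 := by ring
        _ ≤ M * T := by apply mul_le_mul_of_nonneg_left hu (le_of_lt hM0Z)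
        _ = d (Fin.last k) i := hdu.symm
  have hZcard : (M:ℤ) * Z.card ≤ (n:ℤ) - 1 := by
    calc (M:ℤ) * Z.card = ∑ _i ∈ Z, (M:ℤ) := by
          rw [Finset.sum_const, nsmul_eq_mul]; ring
      _ ≤ ∑ i ∈ Z, d (Fin.last k) i := Finset.sum_le_sum hZbound
      _ ≤ ∑ i ∈ Finset.range p, d (Fin.last k) i := by
          apply Finset.sum_le_sum_of_subset_of_nonneg (Finset.filter_subset _ _)
          intro i hi _
          exact le_trans zero_le_one (hd1 _ i (Finset.mem_range.mp hi))
      _ ≤ (n:ℤ) - 1 := htel _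
  have hNbound : ∀ i ∈ NN,
      (n:ℤ) ≤ (M:ℤ) * (∑ j : Fin k, d j.castSucc i) + d (Fin.last k) i := by
    intro i hi
    rw [hNNset, Finset.mem_filter, Finset.mem_range] at hi
    obtain ⟨hip, hD0⟩ := hi
    have h1 : (n:ℤ) ≤ |D i| := Int.le_of_dvd (abs_pos.mpr hD0) ((dvd_abs _ _).mpr (hDdvd i))
    have hdnn : ∀ j, (0:ℤ) ≤ d j i := fun j => le_trans zero_le_one (hd1 j i hip)
    have hT : |∑ j : Fin k, s j.castSucc * d j.castSucc i| ≤ ∑ j : Fin k, d j.castSucc i := by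
      refine (Finset.abs_sum_le_sum_abs _ _).trans (Finset.sum_le_sum ?_)
      intro j _
      rw [abs_mul]
      rcases hscases j.castSucc with hc | hc <;> rw [hc] <;>
        simp [abs_of_nonneg (hdnn j.castSucc)]
    have hl : |s (Fin.last k) * d (Fin.last k) i| = d (Fin.last k) i := by
      rw [abs_mul]
      rcases hscases (Fin.last k) with hc | hc <;> rw [hc] <;>
        simp [abs_of_nonneg (hdnn (Fin.last k))]
    have h2 : |D i| ≤ (M:ℤ) * (∑ j : Fin k, d j.castSucc i) + d (Fin.last k) i := by
      have hrep := hDrep i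
      calc |D i| = |(M:ℤ) * (∑ j : Fin k, s j.castSucc * d j.castSucc i)
            + s (Fin.last k) * d (Fin.last k) i| := congrArg abs hrep
        _ ≤ |(M:ℤ) * (∑ j : Fin k, s j.castSucc * d j.castSucc i)|
            + |s (Fin.last k) * d (Fin.last k) i| := abs_add_le _ _
        _ = (M:ℤ) * |∑ j : Fin k, s j.castSucc * d j.castSucc i| + d (Fin.last k) i := by
            rw [abs_mul, hl, abs_of_nonneg (le_of_lt hM0Z)]
        _ ≤ (M:ℤ) * (∑ j : Fin k, d j.castSucc i) + d (Fin.last k) i := by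
            have := mul_le_mul_of_nonneg_left hT (le_of_lt hM0Z)
            linarith
    linarith
  have hNcard : (n:ℤ) * NN.card ≤ ((n:ℤ) - 1) * ((M:ℤ) * k + 1) := by
    have hc1 : (n:ℤ) * NN.card = ∑ _i ∈ NN, (n:ℤ) := by
      rw [Finset.sum_const, nsmul_eq_mul]; ring
    have hc2 : ∑ _i ∈ NN, (n:ℤ)
        ≤ ∑ i ∈ NN, ((M:ℤ) * (∑ j : Fin k, d j.castSucc i) + d (Fin.last k) i) :=
      Finset.sum_le_sum hNbound
    have hc3 : ∑ i ∈ NN, ((M:ℤ) * (∑ j : Fin k, d j.castSucc i) + d (Fin.last k) i)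
        ≤ ∑ i ∈ Finset.range p, ((M:ℤ) * (∑ j : Fin k, d j.castSucc i) + d (Fin.last k) i) := by
      apply Finset.sum_le_sum_of_subset_of_nonneg (Finset.filter_subset _ _)
      intro i hi _
      have hdnn : ∀ j, (0:ℤ) ≤ d j i := fun j =>
        le_trans zero_le_one (hd1 j i (Finset.mem_range.mp hi))
      have h1 : (0:ℤ) ≤ ∑ j : Fin k, d j.castSucc i :=
        Finset.sum_nonneg fun j _ => hdnn j.castSucc
      have h2 := hdnn (Fin.last k)
      nlinarith
    have hc4 : ∑ i ∈ Finset.range p, ((M:ℤ) * (∑ j : Fin k, d j.castSucc i) + d (Fin.last k) i)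
        = (M:ℤ) * (∑ j : Fin k, ∑ i ∈ Finset.range p, d j.castSucc i)
          + ∑ i ∈ Finset.range p, d (Fin.last k) i := by
      rw [Finset.sum_add_distrib, ← Finset.mul_sum, Finset.sum_comm]
    have hc5 : ∑ j : Fin k, ∑ i ∈ Finset.range p, d j.castSucc i ≤ (k:ℤ) * ((n:ℤ) - 1) := by
      calc ∑ j : Fin k, ∑ i ∈ Finset.range p, d j.castSucc i
          ≤ ∑ _j : Fin k, ((n:ℤ) - 1) := Finset.sum_le_sum fun j _ => htel _
        _ = (k:ℤ) * ((n:ℤ) - 1) := by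
            rw [Finset.sum_const, Finset.card_univ, Fintype.card_fin, nsmul_eq_mul]
    have hc6 := htel (Fin.last k)
    have := mul_le_mul_of_nonneg_left hc5 (le_of_lt hM0Z)
    have hfinal : (n:ℤ) * NN.card ≤ (M:ℤ) * ((k:ℤ) * ((n:ℤ)-1)) + ((n:ℤ)-1) := by
      rw [hc1]
      calc ∑ _i ∈ NN, (n:ℤ) ≤ _ := hc2
        _ ≤ _ := hc3
        _ = _ := hc4
        _ ≤ (M:ℤ) * ((k:ℤ) * ((n:ℤ)-1)) + ((n:ℤ)-1) := by linarith
    linarith [hfinal]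
  -- final real arithmetic
  have hZR : (Z.card : ℝ) < (n:ℝ)/(M:ℝ) := by
    rw [lt_div_iff₀ hM0R]
    have h1 : (M:ℝ) * (Z.card:ℝ) ≤ (n:ℝ) - 1 := by exact_mod_cast hZcard
    linarith
  have hNR : (NN.card : ℝ) < (M:ℝ)*(k:ℝ) + 1 := by
    have h1 : (n:ℝ) * (NN.card:ℝ) ≤ ((n:ℝ)-1)*((M:ℝ)*(k:ℝ)+1) := by exact_mod_cast hNcard
    have h2 : (0:ℝ) < (M:ℝ)*(k:ℝ)+1 := by positivity
    have h3 : (n:ℝ) * (NN.card:ℝ) < (n:ℝ)*((M:ℝ)*(k:ℝ)+1) := by nlinarith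
    exact lt_of_mul_lt_mul_left h3 (le_of_lt hn0R)
  have hmZ : (m:ℝ) = (Z.card:ℝ) + (NN.card:ℝ) + 1 := by
    have h1 : m = Z.card + NN.card + 1 := by omega
    exact_mod_cast h1
  rw [hmZ]
  have hexp : ((k:ℝ)+1)*(M:ℝ) = (M:ℝ)*(k:ℝ) + (M:ℝ) := by ring
  linarith


/-- For `n ≥ k+1` prime and `M = ⌊√(n/(k+1))⌋`, the array given by
`A(α) = 1 ↔ M(α_1 + ⋯ + α_k) + α_{k+1} ≡ 0 (mod n)` (coordinates taking values
in `{1, …, n}`) is an order-`n` `k`-dimensional permutation, all of whose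
monotone subsequences have length less than `(k+1)M + n/M + 1`. -/
theorem construction_prime (n k M : ℕ) (hk : 1 ≤ k) (hn : n.Prime) (hnk : k + 1 ≤ n)
    (hM : M = Nat.sqrt (n / (k + 1)))
    (A : (Fin (k + 1) → Fin n) → Bool)
    (hA : ∀ α : Fin (k + 1) → Fin n,
      A α = decide ((M * (∑ i : Fin k, ((α i.castSucc : ℕ) + 1))
        + ((α (Fin.last k) : ℕ) + 1)) % n = 0)) :
    IsHDPerm n k A ∧
      ∀ (m : ℕ) (α : Fin m → (Fin (k + 1) → Fin n)), IsMonoSub n k m A α →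
        (m : ℝ) < ((k : ℝ) + 1) * M + (n : ℝ) / (M : ℝ) + 1 := by
  have hn2 : 2 ≤ n := hn.two_le
  have hM1 : 1 ≤ M := by
    rw [hM]
    have h1 : 0 < n / (k + 1) := Nat.div_pos hnk (by omega)
    exact Nat.sqrt_pos.mpr h1
  have hMn : M < n := by
    calc M ≤ Nat.sqrt n := by rw [hM]; exact Nat.sqrt_le_sqrt (Nat.div_le_self _ _)
      _ < n := Nat.sqrt_lt_self (by omega)
  exact ⟨hd_part1 n k M hn (by omega) hMn A hA,
    fun m α h => part2 n k M hk hn2 hM1 A hA m α h⟩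
end

section
/- Let k ≥ 1 and n ≥ 1, let c, d ∈ {0,1}^{k+1} differ in exactly one coordinate, and let r, s be integers with r ≥ 9(k+10), s ≥ 9(k+10), and r·s > 5kn. Then there exists A ∈ L_n^k that contains no <_c-monotone subsequence of length r and no <_d-monotone subsequence of length s. -/
open scoped Classical

namespace HDES


/-- number of `x < n` with `x % a < g` -/
def cum (n a g : ℕ) : ℕ := ((Finset.range n).filter (fun x => x % a < g)).card

/-- the multiplication-like bijection of `[0,n)` with "slope" roughly `a` -/
def chi (n a v : ℕ) : ℕ := cum n a (v % a) + v / a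

def flipv (n : ℕ) (b : Bool) (t : Fin n) : ℕ := if b then (t : ℕ) else n - 1 - (t : ℕ)

def Rsum (n k : ℕ) (c : Fin (k+1) → Bool) (i0 : Fin (k+1)) (x : Fin (k+1) → Fin n) : ℕ :=
  ∑ j ∈ Finset.univ.erase i0, flipv n (c j) (x j)

def negmod (n R : ℕ) : ℕ := (n - R % n) % n

def myA (n k a : ℕ) (c : Fin (k+1) → Bool) (i0 : Fin (k+1)) : (Fin (k+1) → Fin n) → Bool :=
  fun x => decide (flipv n (c i0) (x i0) = chi n a (negmod n (Rsum n k c i0 x)))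

lemma cum_mono {n a : ℕ} {g g' : ℕ} (h : g ≤ g') : cum n a g ≤ cum n a g' := by
  apply Finset.card_le_card
  intro x hx
  simp only [Finset.mem_filter, Finset.mem_range] at hx ⊢
  omega

lemma cum_top {n a : ℕ} (ha : 1 ≤ a) : cum n a a = n := by
  unfold cum
  rw [Finset.filter_true_of_mem, Finset.card_range]
  intro x _
  exact Nat.mod_lt x ha

lemma chi_lt_cum_succ {n a : ℕ} (ha : 1 ≤ a) {v : ℕ} (hv : v < n) :
    chi n a v < cum n a (v % a + 1) := by
  classical
  have hγa : v % a < a := Nat.mod_lt v ha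
  have hdm : a * (v / a) + v % a = v := Nat.div_add_mod v a
  -- the image set T of j ↦ v % a + a * j for j ≤ v / a
  set T : Finset ℕ := (Finset.range (v / a + 1)).image (fun j => v % a + a * j) with hT
  have hTsub : T ⊆ (Finset.range n).filter (fun x => x % a = v % a) := by
    intro x hx
    simp only [hT, Finset.mem_image, Finset.mem_range] at hx
    obtain ⟨j, hj, rfl⟩ := hx
    have hja : a * j ≤ a * (v / a) := Nat.mul_le_mul_left a (by omega)
    simp only [Finset.mem_filter, Finset.mem_range]
    constructor
    · omega
    · rw [mul_comm, Nat.add_mul_mod_self_right]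
      exact Nat.mod_eq_of_lt hγa
  have hTcard : T.card = v / a + 1 := by
    rw [hT, Finset.card_image_of_injective, Finset.card_range]
    intro x y hxy
    simp only at hxy
    have : a * x = a * y := by omega
    exact Nat.eq_of_mul_eq_mul_left (by omega) this
  have hdisj : Disjoint ((Finset.range n).filter (fun x => x % a < v % a))
      ((Finset.range n).filter (fun x => x % a = v % a)) := by
    rw [Finset.disjoint_left]
    intro x h1 h2
    simp only [Finset.mem_filter] at h1 h2
    omega
  have hunion : ((Finset.range n).filter (fun x => x % a < v % a)) ∪
      ((Finset.range n).filter (fun x => x % a = v % a)) =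
      (Finset.range n).filter (fun x => x % a < v % a + 1) := by
    rw [← Finset.filter_or]
    apply Finset.filter_congr
    intro x _
    constructor <;> intro h <;> omega
  have h1 : cum n a (v % a) + T.card ≤ cum n a (v % a + 1) := by
    have h2 : cum n a (v % a) + T.card ≤
        (((Finset.range n).filter (fun x => x % a < v % a)) ∪
        ((Finset.range n).filter (fun x => x % a = v % a))).card := by
      rw [Finset.card_union_of_disjoint hdisj]
      exact Nat.add_le_add_left (Finset.card_le_card hTsub) _
    rw [hunion] at h2
    exact h2
  unfold chi
  omega

lemma chi_lt {n a : ℕ} (ha : 1 ≤ a) {v : ℕ} (hv : v < n) : chi n a v < n := by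
  have h1 := chi_lt_cum_succ ha hv
  have h2 : cum n a (v % a + 1) ≤ cum n a a := cum_mono (Nat.mod_lt v ha)
  rw [cum_top ha] at h2
  omega

lemma chi_order {n a : ℕ} (ha : 1 ≤ a) {v v' : ℕ} (hv : v < n) (hv' : v' < n)
    (h : chi n a v < chi n a v') :
    v % a ≤ v' % a ∧ (v % a = v' % a → v < v') := by
  constructor
  · by_contra hgt
    push_neg at hgt
    have h1 : chi n a v' < cum n a (v' % a + 1) := chi_lt_cum_succ ha hv'
    have h2 : cum n a (v' % a + 1) ≤ cum n a (v % a) := cum_mono (by omega)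
    have h3 : cum n a (v % a) ≤ chi n a v := Nat.le_add_right _ _
    omega
  · intro he
    have h4 : v / a < v' / a := by
      unfold chi at h
      rw [he] at h
      omega
    have h5 := Nat.div_add_mod v a
    have h6 := Nat.div_add_mod v' a
    have h7 : a * (v / a + 1) ≤ a * (v' / a) := Nat.mul_le_mul_left a h4
    have h8 : a * (v / a + 1) = a * (v / a) + a := by ring
    omega

lemma chi_inj {n a : ℕ} (ha : 1 ≤ a) {v v' : ℕ} (hv : v < n) (hv' : v' < n)
    (h : chi n a v = chi n a v') : v = v' := by
  rcases Nat.lt_trichotomy (v % a) (v' % a) with hm | hm | hm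
  · have h1 : chi n a v < cum n a (v % a + 1) := chi_lt_cum_succ ha hv
    have h2 : cum n a (v % a + 1) ≤ cum n a (v' % a) := cum_mono (by omega)
    have h3 : cum n a (v' % a) ≤ chi n a v' := Nat.le_add_right _ _
    omega
  · have h4 : v / a = v' / a := by
      unfold chi at h
      rw [hm] at h
      omega
    have h5 := Nat.div_add_mod v a
    have h6 := Nat.div_add_mod v' a
    rw [hm, h4] at h5
    omega
  · have h1 : chi n a v' < cum n a (v' % a + 1) := chi_lt_cum_succ ha hv'
    have h2 : cum n a (v' % a + 1) ≤ cum n a (v % a) := cum_mono (by omega)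
    have h3 : cum n a (v % a) ≤ chi n a v := Nat.le_add_right _ _
    omega

lemma chi_surj {n a : ℕ} (ha : 1 ≤ a) (hn : 1 ≤ n) {w : ℕ} (hw : w < n) :
    ∃ v, v < n ∧ chi n a v = w := by
  have hsurj : Function.Surjective (fun v : Fin n => (⟨chi n a v, chi_lt ha v.isLt⟩ : Fin n)) := by
    rw [← Finite.injective_iff_surjective]
    intro v v' hvv
    have : chi n a v = chi n a v' := congrArg Fin.val hvv
    exact Fin.ext (chi_inj ha v.isLt v'.isLt this)
  obtain ⟨v, hv⟩ := hsurj ⟨w, hw⟩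
  exact ⟨v, v.isLt, congrArg Fin.val hv⟩

lemma negmod_lt {n : ℕ} (hn : 1 ≤ n) (R : ℕ) : negmod n R < n := Nat.mod_lt _ hn

lemma negmod_dvd {n : ℕ} (hn : 1 ≤ n) (R : ℕ) : n ∣ (R + negmod n R) := by
  unfold negmod
  have h1 : R % n < n := Nat.mod_lt _ hn
  have h2 := Nat.div_add_mod R n
  rcases Nat.eq_zero_or_pos (R % n) with h | h
  · rw [h, Nat.sub_zero, Nat.mod_self, Nat.add_zero]
    exact Nat.dvd_of_mod_eq_zero h
  · have h3 : (n - R % n) % n = n - R % n := Nat.mod_eq_of_lt (by omega)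
    rw [h3]
    refine ⟨R / n + 1, ?_⟩
    have h4 : n * (R / n + 1) = n * (R / n) + n := by ring
    omega

lemma negmod_negmod {n : ℕ} (hn : 1 ≤ n) {ρ : ℕ} (hρ : ρ < n) :
    negmod n (negmod n ρ) = ρ := by
  unfold negmod
  have hρm : ρ % n = ρ := Nat.mod_eq_of_lt hρ
  rw [hρm]
  rcases Nat.eq_zero_or_pos ρ with rfl | h
  · simp [Nat.mod_self]
  · have h2 : (n - ρ) % n = n - ρ := Nat.mod_eq_of_lt (by omega)
    rw [h2, h2]
    have h3 : n - (n - ρ) = ρ := by omega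
    rw [h3]
    exact hρm

lemma negmod_mod {n : ℕ} (hn : 1 ≤ n) (X : ℕ) : negmod n (X % n) = negmod n X := by
  unfold negmod
  rw [Nat.mod_eq_of_lt (Nat.mod_lt X hn)]

lemma negmod_eq_iff {n : ℕ} (hn : 1 ≤ n) {X w : ℕ} (hw : w < n) :
    negmod n X = w ↔ X % n = negmod n w := by
  constructor
  · intro h
    have h1 : negmod n (negmod n (X % n)) = X % n := negmod_negmod hn (Nat.mod_lt X hn)
    rw [negmod_mod hn, h] at h1
    exact h1.symm
  · intro h
    rw [← negmod_mod hn, h]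
    exact negmod_negmod hn hw

lemma modsolve {n : ℕ} (hn : 1 ≤ n) (C : ℕ) {tgt : ℕ} (h : tgt < n) :
    ∃! y, y < n ∧ (C + y) % n = tgt := by
  have hc : C % n < n := Nat.mod_lt _ hn
  have key : ∀ y₁ y₂, y₁ < n → y₂ < n → (C + y₁) % n = (C + y₂) % n → y₁ = y₂ := by
    intro y₁ y₂ h1 h2 he
    have he' : y₁ ≡ y₂ [MOD n] := Nat.ModEq.add_left_cancel' C he
    unfold Nat.ModEq at he'
    rw [Nat.mod_eq_of_lt h1, Nat.mod_eq_of_lt h2] at he'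
    exact he'
  rcases le_or_gt (C % n) tgt with hle | hlt
  · have hp : (C + (tgt - C % n)) % n = tgt := by
      conv_lhs => rw [Nat.add_mod]
      have h2 : (tgt - C % n) % n = tgt - C % n := Nat.mod_eq_of_lt (by omega)
      rw [h2]
      have h3 : C % n + (tgt - C % n) = tgt := by omega
      rw [h3, Nat.mod_eq_of_lt h]
    exact ⟨tgt - C % n, ⟨by omega, hp⟩, fun y hy => key y _ hy.1 (by omega) (by rw [hy.2, hp])⟩
  · have hp : (C + (tgt + n - C % n)) % n = tgt := by
      conv_lhs => rw [Nat.add_mod]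
      have h2 : (tgt + n - C % n) % n = tgt + n - C % n := Nat.mod_eq_of_lt (by omega)
      rw [h2]
      have h3 : C % n + (tgt + n - C % n) = tgt + n := by omega
      rw [h3, Nat.add_mod_right, Nat.mod_eq_of_lt h]
    exact ⟨tgt + n - C % n, ⟨by omega, hp⟩, fun y hy => key y _ hy.1 (by omega) (by rw [hy.2, hp])⟩

lemma mod_eq_lt_ge {x y a : ℕ} (ha : 1 ≤ a) (h : y < x) (he : x % a = y % a) :
    y + a ≤ x := by
  have hx := Nat.div_add_mod x a
  have hy := Nat.div_add_mod y a
  have hq : y / a < x / a := by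
    by_contra hc
    push_neg at hc
    have := Nat.mul_le_mul_left a hc
    omega
  have h3 : a * (y / a + 1) ≤ a * (x / a) := Nat.mul_le_mul_left a (by omega)
  have h4 : a * (y / a + 1) = a * (y / a) + a := by ring
  omega

lemma flipv_lt {n : ℕ} (hn : 1 ≤ n) (b : Bool) (t : Fin n) : flipv n b t < n := by
  have := t.isLt
  cases b <;> simp [flipv] <;> omega

lemma flipv_exu {n : ℕ} (hn : 1 ≤ n) (b : Bool) {V : ℕ} (hV : V < n) :
    ∃! t : Fin n, flipv n b t = V := by
  cases b
  · refine ⟨⟨n - 1 - V, by omega⟩, by simp [flipv]; omega, ?_⟩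
    intro t ht
    have hti := t.isLt
    simp only [flipv, Bool.false_eq_true, if_false] at ht
    exact Fin.ext (show (t : ℕ) = n - 1 - V by omega)
  · refine ⟨⟨V, hV⟩, by simp [flipv], ?_⟩
    intro t ht
    simp only [flipv, if_true] at ht
    exact Fin.ext (by simpa using ht)

lemma myA_isHDPerm {n a k : ℕ} (hn : 1 ≤ n) (ha : 1 ≤ a)
    (c : Fin (k+1) → Bool) (i0 : Fin (k+1)) : IsHDPerm n k (myA n k a c i0) := by
  intro j x
  rcases eq_or_ne j i0 with rfl | hj
  · have hR : ∀ t : Fin n, Rsum n k c j (Function.update x j t) = Rsum n k c j x := by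
      intro t
      unfold Rsum
      apply Finset.sum_congr rfl
      intro l hl
      rw [Function.update_of_ne (Finset.ne_of_mem_erase hl)]
    have hVlt : chi n a (negmod n (Rsum n k c j x)) < n := chi_lt ha (negmod_lt hn _)
    obtain ⟨t, ht, htu⟩ := flipv_exu hn (c j) hVlt
    refine ⟨t, ?_, ?_⟩
    · simp only [myA, decide_eq_true_eq]
      rw [Function.update_self, hR]
      exact ht
    · intro t' ht'
      simp only [myA, decide_eq_true_eq] at ht'
      rw [Function.update_self, hR] at ht'
      exact htu t' ht'
  · have hjmem : j ∈ Finset.univ.erase i0 := Finset.mem_erase.mpr ⟨hj, Finset.mem_univ j⟩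
    have hR : ∀ t : Fin n, Rsum n k c i0 (Function.update x j t) =
        flipv n (c j) t + ∑ l ∈ (Finset.univ.erase i0).erase j, flipv n (c l) (x l) := by
      intro t
      unfold Rsum
      rw [← Finset.add_sum_erase _ _ hjmem]
      congr 1
      · rw [Function.update_self]
      · apply Finset.sum_congr rfl
        intro l hl
        rw [Function.update_of_ne (Finset.ne_of_mem_erase hl)]
    set C := ∑ l ∈ (Finset.univ.erase i0).erase j, flipv n (c l) (x l) with hC
    have hU : ∀ t : Fin n, flipv n (c i0) (Function.update x j t i0) = flipv n (c i0) (x i0) := by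
      intro t
      rw [Function.update_of_ne (Ne.symm hj)]
    have hUlt : flipv n (c i0) (x i0) < n := flipv_lt hn _ _
    obtain ⟨w, hwlt, hwchi⟩ := chi_surj ha hn hUlt
    obtain ⟨y, ⟨hylt, hyp⟩, hyu⟩ := modsolve hn C (Nat.mod_lt (n - w) hn : (n - w) % n < n)
    have hnw : negmod n w = (n - w) % n := by
      unfold negmod
      rw [Nat.mod_eq_of_lt hwlt]
    obtain ⟨t, ht, htu⟩ := flipv_exu hn (c j) hylt
    have hkey : ∀ t' : Fin n, (myA n k a c i0 (Function.update x j t') = true) ↔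
        flipv n (c j) t' = y := by
      intro t'
      simp only [myA, decide_eq_true_eq]
      rw [hU, hR]
      constructor
      · intro hh
        have h1 : negmod n (flipv n (c j) t' + C) = w :=
          chi_inj ha (negmod_lt hn _) hwlt (hwchi ▸ hh.symm)
        have h2 : (flipv n (c j) t' + C) % n = negmod n w := (negmod_eq_iff hn hwlt).mp h1
        have h3 : (C + flipv n (c j) t') % n = (n - w) % n := by
          rw [add_comm] at h2
          rw [← hnw]
          exact h2
        exact hyu _ ⟨flipv_lt hn _ _, h3⟩
      · intro hh
        rw [hh]
        have h2 : (y + C) % n = negmod n w := by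
          rw [add_comm, hnw]
          exact hyp
        have h1 : negmod n (y + C) = w := (negmod_eq_iff hn hwlt).mpr h2
        rw [h1, hwchi]
    refine ⟨t, (hkey t).mpr ht, fun t' ht' => htu t' ((hkey t').mp ht')⟩

lemma Rsum_le {n a k : ℕ} (hn : 1 ≤ n) (c : Fin (k+1) → Bool) (i0 : Fin (k+1))
    (x : Fin (k+1) → Fin n) : Rsum n k c i0 x ≤ k * (n - 1) := by
  have hcard : (Finset.univ.erase i0).card = k := by
    rw [Finset.card_erase_of_mem (Finset.mem_univ _), Finset.card_univ, Fintype.card_fin]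
    omega
  calc Rsum n k c i0 x ≤ (Finset.univ.erase i0).card • (n - 1) := by
        apply Finset.sum_le_card_nsmul
        intro l _
        have := flipv_lt hn (c l) (x l)
        omega
    _ = k * (n - 1) := by rw [hcard, smul_eq_mul]

lemma lam_mono {n a : ℕ} (ha : 1 ≤ a) {v v' : ℕ} (hv : v < n) (hv' : v' < n)
    (h : chi n a v < chi n a v') :
    (v : ℤ) + (n : ℤ) * ((v % a : ℕ) : ℤ) < (v' : ℤ) + (n : ℤ) * ((v' % a : ℕ) : ℤ) := by
  obtain ⟨h1, h2⟩ := chi_order ha hv hv' h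
  rcases lt_or_eq_of_le h1 with h3 | h3
  · have h4 : ((v % a : ℕ) : ℤ) + 1 ≤ ((v' % a : ℕ) : ℤ) := by exact_mod_cast h3
    have h5 : (n : ℤ) * (((v % a : ℕ) : ℤ) + 1) ≤ (n : ℤ) * ((v' % a : ℕ) : ℤ) :=
      mul_le_mul_of_nonneg_left h4 (by positivity)
    have h6 : (v : ℤ) < (n : ℤ) := by exact_mod_cast hv
    have h7 : (0 : ℤ) ≤ (v' : ℤ) := by positivity
    nlinarith
  · have h4 : v < v' := h2 h3
    have h5 : (v : ℤ) < (v' : ℤ) := by exact_mod_cast h4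
    rw [h3]
    linarith

lemma dvd_step_ge {n : ℕ} (hn : 1 ≤ n) {x y : ℤ} (hx : (n : ℤ) ∣ x) (hy : (n : ℤ) ∣ y)
    (h : x < y) : x + n ≤ y := by
  obtain ⟨u, rfl⟩ := hx
  obtain ⟨w, rfl⟩ := hy
  have hn' : (0 : ℤ) < (n : ℤ) := by exact_mod_cast hn
  have h1 : u < w := lt_of_mul_lt_mul_left h (le_of_lt hn')
  have h2 : (n : ℤ) * (u + 1) ≤ (n : ℤ) * w := mul_le_mul_of_nonneg_left (by omega) (le_of_lt hn')
  linarith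

lemma no_c_chain {n a k m : ℕ} (hn : 1 ≤ n) (ha : 1 ≤ a)
    (c : Fin (k+1) → Bool) (i0 : Fin (k+1)) (hm : k + a + 1 ≤ m)
    (α : Fin m → (Fin (k+1) → Fin n))
    (hA : ∀ i, myA n k a c i0 (α i) = true)
    (hmono : ∀ i j : Fin m, i < j → ∀ l : Fin (k+1),
      flipv n (c l) (α i l) < flipv n (c l) (α j l)) : False := by
  have hm1 : 1 ≤ m := by omega
  set M := m - 1 with hM
  have hlt : ∀ i : ℕ, min i M < m := fun i => by omega
  set P : ℕ → (Fin (k+1) → Fin n) := fun i => α ⟨min i M, hlt i⟩ with hP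
  set R : ℕ → ℕ := fun i => Rsum n k c i0 (P i) with hR
  set V : ℕ → ℕ := fun i => negmod n (R i) with hV
  set E : ℕ → ℤ := fun i => (R i : ℤ) + (V i : ℤ) + (n : ℤ) * ((V i % a : ℕ) : ℤ) with hE
  have hsupp : ∀ i, flipv n (c i0) (P i i0) = chi n a (V i) := by
    intro i
    have := hA ⟨min i M, hlt i⟩
    simp only [myA, decide_eq_true_eq] at this
    exact this
  have hstep : ∀ i, i < M → ∀ l : Fin (k+1), flipv n (c l) (P i l) < flipv n (c l) (P (i+1) l) := by
    intro i hi l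
    apply hmono
    rw [Fin.lt_def]
    simp only
    omega
  have hVlt : ∀ i, V i < n := fun i => negmod_lt hn _
  have hRstep : ∀ i, i < M → R i ≤ R (i + 1) := by
    intro i hi
    apply Finset.sum_le_sum
    intro l _
    exact le_of_lt (hstep i hi l)
  have hdvd : ∀ i, (n : ℤ) ∣ E i := by
    intro i
    have h1 : n ∣ (R i + V i) := negmod_dvd hn (R i)
    have h2 : (n : ℤ) ∣ ((R i : ℤ) + (V i : ℤ)) := by exact_mod_cast h1
    exact dvd_add h2 (dvd_mul_right _ _)
  have hEstep : ∀ i, i < M → E i + n ≤ E (i + 1) := by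
    intro i hi
    have h1 : chi n a (V i) < chi n a (V (i+1)) := by
      rw [← hsupp i, ← hsupp (i+1)]
      exact hstep i hi i0
    have h2 := lam_mono ha (hVlt i) (hVlt (i+1)) h1
    have h3 : (R i : ℤ) ≤ (R (i+1) : ℤ) := by exact_mod_cast hRstep i hi
    have h4 : E i < E (i + 1) := by
      simp only [hE]
      linarith
    exact dvd_step_ge hn (hdvd i) (hdvd (i+1)) h4
  have htel : ∀ i, i ≤ M → E 0 + (n : ℤ) * i ≤ E i := by
    intro i
    induction i with
    | zero => intro _; simp
    | succ t ih =>
      intro hti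
      have h1 := ih (by omega)
      have h2 := hEstep t (by omega)
      have h3 : ((t + 1 : ℕ) : ℤ) = (t : ℕ) + 1 := by push_cast; ring
      rw [h3]
      nlinarith [h1, h2]
  have hfin := htel M le_rfl
  have hE0 : (0 : ℤ) ≤ E 0 := by
    simp only [hE]
    positivity
  have hEM : E M ≤ (k : ℤ) * ((n : ℤ) - 1) + ((n : ℤ) - 1) + (n : ℤ) * ((a : ℤ) - 1) := by
    have h1 : (R M : ℤ) ≤ (k : ℤ) * ((n : ℤ) - 1) := by
      have := Rsum_le (a := a) hn c i0 (P M)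
      have h2 : (R M : ℤ) ≤ ((k * (n-1) : ℕ) : ℤ) := by exact_mod_cast this
      calc (R M : ℤ) ≤ ((k * (n-1) : ℕ) : ℤ) := h2
        _ = (k : ℤ) * (((n - 1 : ℕ)) : ℤ) := by push_cast; ring
        _ ≤ (k : ℤ) * ((n : ℤ) - 1) := by
            apply mul_le_mul_of_nonneg_left _ (by positivity)
            omega
    have h2 : (V M : ℤ) ≤ (n : ℤ) - 1 := by
      have := hVlt M
      omega
    have h3 : ((V M % a : ℕ) : ℤ) ≤ (a : ℤ) - 1 := by
      have := Nat.mod_lt (V M) ha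
      omega
    have h4 : (n : ℤ) * ((V M % a : ℕ) : ℤ) ≤ (n : ℤ) * ((a : ℤ) - 1) :=
      mul_le_mul_of_nonneg_left h3 (by positivity)
    simp only [hE]
    linarith
  have hMge : (k : ℤ) + a ≤ (M : ℤ) := by
    have : k + a ≤ M := by omega
    exact_mod_cast this
  have hnz : (1 : ℤ) ≤ (n : ℤ) := by exact_mod_cast hn
  have hkz : (0 : ℤ) ≤ (k : ℤ) := by positivity
  nlinarith [hfin, hE0, hEM, hMge, hnz, hkz]

lemma dvd_small_zero {n : ℕ} (hn : 1 ≤ n) {d : ℤ} (hd : (n : ℤ) ∣ d)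
    (h0 : 0 ≤ d) (h1 : d < n) : d = 0 := by
  obtain ⟨u, rfl⟩ := hd
  have hn' : (0 : ℤ) < (n : ℤ) := by exact_mod_cast hn
  have h2 : 0 ≤ u := nonneg_of_mul_nonneg_right h0 hn'
  have h3 : u < 1 := by
    by_contra hc
    push_neg at hc
    nlinarith
  have : u = 0 := by omega
  rw [this, mul_zero]

set_option maxHeartbeats 1000000 in
lemma no_d_chain {n a k m : ℕ} (hn : 1 ≤ n) (ha : 1 ≤ a) (hka : k ≤ a) (han : a ≤ n)
    (c : Fin (k+1) → Bool) (i0 : Fin (k+1)) (hm1 : 1 ≤ m)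
    (harith : (k : ℤ) * ((n : ℤ) - 1) + ((a : ℤ) - (k : ℤ)) * ((a : ℤ) - 1)
      < (a : ℤ) * ((m : ℤ) - 1))
    (α : Fin m → (Fin (k+1) → Fin n))
    (hA : ∀ i, myA n k a c i0 (α i) = true)
    (hmono1 : ∀ i j : Fin m, i < j → ∀ l ∈ Finset.univ.erase i0,
      flipv n (c l) (α i l) < flipv n (c l) (α j l))
    (hmono2 : ∀ i j : Fin m, i < j →
      flipv n (c i0) (α j i0) < flipv n (c i0) (α i i0)) : False := by
  set M := m - 1 with hM
  have hlt : ∀ i : ℕ, min i M < m := fun i => by omega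
  set P : ℕ → (Fin (k+1) → Fin n) := fun i => α ⟨min i M, hlt i⟩ with hP
  set R : ℕ → ℕ := fun i => Rsum n k c i0 (P i) with hR
  set V : ℕ → ℕ := fun i => negmod n (R i) with hV
  set L : ℕ → ℤ := fun i => (V i : ℤ) + (n : ℤ) * ((V i % a : ℕ) : ℤ) with hL
  set E : ℕ → ℤ := fun i => (R i : ℤ) + L i with hE
  have hsupp : ∀ i, flipv n (c i0) (P i i0) = chi n a (V i) := by
    intro i
    have := hA ⟨min i M, hlt i⟩
    simp only [myA, decide_eq_true_eq] at this
    exact this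
  have hfinlt : ∀ i, i < M → (⟨min i M, hlt i⟩ : Fin m) < ⟨min (i+1) M, hlt (i+1)⟩ := by
    intro i hi
    rw [Fin.lt_def]
    simp only
    omega
  have hVlt : ∀ i, V i < n := fun i => negmod_lt hn _
  have hchidec : ∀ i, i < M → chi n a (V (i+1)) < chi n a (V i) := by
    intro i hi
    rw [← hsupp i, ← hsupp (i+1)]
    exact hmono2 _ _ (hfinlt i hi)
  have hgam : ∀ i, i < M →
      V (i+1) % a ≤ V i % a ∧ (V (i+1) % a = V i % a → V (i+1) < V i) :=
    fun i hi => chi_order ha (hVlt (i+1)) (hVlt i) (hchidec i hi)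
  have hcard : (Finset.univ.erase i0).card = k := by
    rw [Finset.card_erase_of_mem (Finset.mem_univ _), Finset.card_univ, Fintype.card_fin]
    omega
  have hRstep : ∀ i, i < M → R i + k ≤ R (i + 1) := by
    intro i hi
    have h2 : ∑ l ∈ Finset.univ.erase i0, (flipv n (c l) (P i l) + 1) ≤
        ∑ l ∈ Finset.univ.erase i0, flipv n (c l) (P (i+1) l) :=
      Finset.sum_le_sum (fun l hl => hmono1 _ _ (hfinlt i hi) l hl)
    rw [Finset.sum_add_distrib, Finset.sum_const, hcard, smul_eq_mul, mul_one] at h2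
    exact h2
  have hdvd : ∀ i, (n : ℤ) ∣ E i := by
    intro i
    have h1 : n ∣ (R i + V i) := negmod_dvd hn (R i)
    have h2 : (n : ℤ) ∣ ((R i : ℤ) + (V i : ℤ)) := by exact_mod_cast h1
    simp only [hE, hL]
    have h3 : (R i : ℤ) + ((V i : ℤ) + (n : ℤ) * ((V i % a : ℕ) : ℤ)) =
        ((R i : ℤ) + (V i : ℤ)) + (n : ℤ) * ((V i % a : ℕ) : ℤ) := by ring
    rw [h3]
    exact dvd_add h2 (dvd_mul_right _ _)
  have hLdec : ∀ i, i < M → L (i+1) < L i :=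
    fun i hi => lam_mono ha (hVlt (i+1)) (hVlt i) (hchidec i hi)
  set δ : ℕ → ℤ := fun i => (R (i+1) : ℤ) - (R i : ℤ) with hδ
  have hc2 : ∀ i, i < M → (k : ℤ) ≤ δ i := by
    intro i hi
    have := hRstep i hi
    simp only [hδ]
    have h1 : ((R i + k : ℕ) : ℤ) ≤ ((R (i+1) : ℕ) : ℤ) := by exact_mod_cast this
    push_cast at h1
    linarith
  have hc1 : ∀ i, i < M → E i < E (i+1) → (n : ℤ) + 1 ≤ δ i := by
    intro i hi hEi
    have h1 : E i + n ≤ E (i+1) := dvd_step_ge hn (hdvd i) (hdvd (i+1)) hEi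
    have h2 : L (i+1) + 1 ≤ L i := hLdec i hi
    simp only [hE] at h1
    simp only [hδ]
    linarith
  have hc3 : ∀ i, i < M → ¬(E i < E (i+1)) → V (i+1) % a = V i % a → (a : ℤ) ≤ δ i := by
    intro i hi hEi heq
    push_neg at hEi
    have hVd : V (i+1) < V i := (hgam i hi).2 heq
    have hLdiff : L i - L (i+1) = (V i : ℤ) - (V (i+1) : ℤ) := by
      simp only [hL, heq]
      ring
    have hLlt : L i - L (i+1) < n := by
      have h1 : (V i : ℤ) < n := by exact_mod_cast hVlt i
      have h2 : (0 : ℤ) ≤ (V (i+1) : ℤ) := by positivity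
      linarith
    have hdnn : (0 : ℤ) ≤ E i - E (i+1) := by linarith
    have hdlt : E i - E (i+1) < n := by
      have h3 := hc2 i hi
      simp only [hδ] at h3
      simp only [hE]
      have hk0 : (0 : ℤ) ≤ (k : ℤ) := by positivity
      linarith
    have hzero : E i - E (i+1) = 0 :=
      dvd_small_zero hn (dvd_sub (hdvd i) (hdvd (i+1))) hdnn hdlt
    have hge : (V (i+1) : ℤ) + a ≤ V i := by
      have := mod_eq_lt_ge ha hVd heq.symm
      exact_mod_cast this
    simp only [hE] at hzero
    simp only [hδ]
    linarith [hLdiff, hzero, hge]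
  -- counting
  set S1 : Finset ℕ := (Finset.range M).filter (fun i => E i < E (i+1)) with hS1
  set S2 : Finset ℕ := (Finset.range M).filter
    (fun i => ¬(E i < E (i+1)) ∧ V (i+1) % a < V i % a) with hS2
  set S3 : Finset ℕ := (Finset.range M).filter
    (fun i => ¬(E i < E (i+1)) ∧ ¬(V (i+1) % a < V i % a)) with hS3
  have hsplit : ∀ f : ℕ → ℤ,
      ∑ i ∈ Finset.range M, f i = ∑ i ∈ S1, f i + (∑ i ∈ S2, f i + ∑ i ∈ S3, f i) := by
    intro f
    have e1 := Finset.sum_filter_add_sum_filter_not (Finset.range M)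
      (fun i => E i < E (i+1)) f
    have e2 := Finset.sum_filter_add_sum_filter_not
      ((Finset.range M).filter (fun i => ¬(E i < E (i+1))))
      (fun i => V (i+1) % a < V i % a) f
    rw [Finset.filter_filter, Finset.filter_filter] at e2
    rw [← hS1] at e1
    rw [← hS2, ← hS3] at e2
    linarith [e1, e2]
  have hsum : ∑ i ∈ Finset.range M, δ i = (R M : ℤ) - (R 0 : ℤ) :=
    Finset.sum_range_sub (fun i => (R i : ℤ)) M
  have hRMle : (R M : ℤ) - (R 0 : ℤ) ≤ (k : ℤ) * ((n : ℤ) - 1) := by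
    have h1 := Rsum_le (a := a) hn c i0 (P M)
    have h2 : (R M : ℤ) ≤ ((k * (n-1) : ℕ) : ℤ) := by exact_mod_cast h1
    have h3 : ((k * (n-1) : ℕ) : ℤ) ≤ (k : ℤ) * ((n : ℤ) - 1) := by
      push_cast
      have : ((n - 1 : ℕ) : ℤ) ≤ (n : ℤ) - 1 := by omega
      have hk0 : (0 : ℤ) ≤ (k : ℤ) := by positivity
      nlinarith
    have h4 : (0 : ℤ) ≤ (R 0 : ℤ) := by positivity
    linarith
  have hb1 : (S1.card : ℤ) * ((n : ℤ) + 1) ≤ ∑ i ∈ S1, δ i := by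
    have := Finset.card_nsmul_le_sum S1 δ ((n : ℤ) + 1) (fun i hi => by
      obtain ⟨hir, hip⟩ := Finset.mem_filter.mp hi
      exact hc1 i (Finset.mem_range.mp hir) hip)
    rwa [nsmul_eq_mul] at this
  have hb2 : (S2.card : ℤ) * (k : ℤ) ≤ ∑ i ∈ S2, δ i := by
    have := Finset.card_nsmul_le_sum S2 δ ((k : ℤ)) (fun i hi => by
      obtain ⟨hir, hip⟩ := Finset.mem_filter.mp hi
      exact hc2 i (Finset.mem_range.mp hir))
    rwa [nsmul_eq_mul] at this
  have hb3 : (S3.card : ℤ) * (a : ℤ) ≤ ∑ i ∈ S3, δ i := by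
    have := Finset.card_nsmul_le_sum S3 δ ((a : ℤ)) (fun i hi => by
      obtain ⟨hir, hip⟩ := Finset.mem_filter.mp hi
      have hg := (hgam i (Finset.mem_range.mp hir)).1
      exact hc3 i (Finset.mem_range.mp hir) hip.1 (by omega))
    rwa [nsmul_eq_mul] at this
  have hcards : (S1.card : ℤ) + ((S2.card : ℤ) + (S3.card : ℤ)) = (M : ℤ) := by
    have h := hsplit (fun _ => (1 : ℤ))
    simp only [Finset.sum_const, nsmul_eq_mul, mul_one, Finset.card_range] at h
    linarith
  have hS2card : (S2.card : ℤ) ≤ (a : ℤ) - 1 := by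
    have h1 : ∑ i ∈ Finset.range M, (((V i % a : ℕ) : ℤ) - ((V (i+1) % a : ℕ) : ℤ)) =
        ((V 0 % a : ℕ) : ℤ) - ((V M % a : ℕ) : ℤ) :=
      Finset.sum_range_sub' (fun i => ((V i % a : ℕ) : ℤ)) M
    have h2 : ((S2.card : ℕ) : ℤ) = ∑ i ∈ Finset.range M,
        (if ¬(E i < E (i+1)) ∧ V (i+1) % a < V i % a then (1 : ℤ) else 0) := by
      rw [Finset.sum_boole]
    have h3 : ∑ i ∈ Finset.range M,
        (if ¬(E i < E (i+1)) ∧ V (i+1) % a < V i % a then (1 : ℤ) else 0) ≤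
        ∑ i ∈ Finset.range M, (((V i % a : ℕ) : ℤ) - ((V (i+1) % a : ℕ) : ℤ)) := by
      apply Finset.sum_le_sum
      intro i hir
      have hg := (hgam i (Finset.mem_range.mp hir)).1
      split
      · next hcond =>
          have := hcond.2
          push_cast
          omega
      · push_cast
        omega
    have h4 : V 0 % a < a := Nat.mod_lt _ ha
    have h5 : ((V 0 % a : ℕ) : ℤ) ≤ (a : ℤ) - 1 := by omega
    have h6 : (0 : ℤ) ≤ ((V M % a : ℕ) : ℤ) := by positivity
    linarith
  -- final accounting
  have hδsplit := hsplit δ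
  have hsum_le : (S1.card : ℤ) * ((n : ℤ) + 1) + (S2.card : ℤ) * (k : ℤ)
      + (S3.card : ℤ) * (a : ℤ) ≤ (k : ℤ) * ((n : ℤ) - 1) := by
    linarith [hb1, hb2, hb3, hδsplit, hsum, hRMle]
  have hMcast : (M : ℤ) = (m : ℤ) - 1 := by omega
  have hc1nn : (0 : ℤ) ≤ (S1.card : ℤ) := Int.natCast_nonneg _
  have hc2nn : (0 : ℤ) ≤ (S2.card : ℤ) := Int.natCast_nonneg _
  have hc3nn : (0 : ℤ) ≤ (S3.card : ℤ) := Int.natCast_nonneg _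
  have hanz : (a : ℤ) ≤ (n : ℤ) + 1 := by omega
  have hkaz : (k : ℤ) ≤ (a : ℤ) := by exact_mod_cast hka
  have hamul : (a : ℤ) * (M : ℤ) = (S1.card : ℤ) * (a : ℤ) + (S2.card : ℤ) * (a : ℤ)
      + (S3.card : ℤ) * (a : ℤ) := by
    rw [← hcards]
    ring
  have h7 : (S1.card : ℤ) * (a : ℤ) ≤ (S1.card : ℤ) * ((n : ℤ) + 1) :=
    mul_le_mul_of_nonneg_left hanz hc1nn
  have h8 : (S2.card : ℤ) * (a : ℤ) = (S2.card : ℤ) * (k : ℤ)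
      + (S2.card : ℤ) * ((a : ℤ) - (k : ℤ)) := by ring
  have h9 : (S2.card : ℤ) * ((a : ℤ) - (k : ℤ)) ≤ ((a : ℤ) - 1) * ((a : ℤ) - (k : ℤ)) :=
    mul_le_mul_of_nonneg_right hS2card (by linarith)
  have h10 : ((a : ℤ) - 1) * ((a : ℤ) - (k : ℤ)) = ((a : ℤ) - (k : ℤ)) * ((a : ℤ) - 1) := by
    ring
  have h11 : (a : ℤ) * (M : ℤ) = (a : ℤ) * ((m : ℤ) - 1) := by rw [hMcast]
  linarith [hamul, h7, h8, h9, hsum_le, harith, h11, h10]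

lemma flipv_lt_flipv {n : ℕ} {b : Bool} {x y : Fin n} (h : if b then x < y else y < x) :
    flipv n b x < flipv n b y := by
  have hx := x.isLt
  have hy := y.isLt
  cases b
  · simp only [Bool.false_eq_true, if_false] at h
    rw [Fin.lt_def] at h
    simp only [flipv, Bool.false_eq_true, if_false]
    omega
  · simp only [if_true] at h
    rw [Fin.lt_def] at h
    simp only [flipv, if_true]
    omega

lemma chain_short {n k m : ℕ} (c' : Fin (k+1) → Bool) (i0 : Fin (k+1))
    (α : Fin m → (Fin (k+1) → Fin n))
    (hlt : ∀ i j : Fin m, i < j → cLT c' (α i) (α j)) : m ≤ n := by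
  have hinj : Function.Injective (fun i : Fin m => α i i0) := by
    intro i j hij
    simp only at hij
    rcases lt_trichotomy i j with h | h | h
    · exfalso
      have h2 := hlt i j h i0
      have h3 := congrArg Fin.val hij
      cases hci : c' i0 <;> simp only [cLT, hci, Bool.false_eq_true, if_false, if_true] at h2 <;>
        rw [Fin.lt_def] at h2 <;> omega
    · exact h
    · exfalso
      have h2 := hlt j i h i0
      have h3 := congrArg Fin.val hij
      cases hci : c' i0 <;> simp only [cLT, hci, Bool.false_eq_true, if_false, if_true] at h2 <;>
        rw [Fin.lt_def] at h2 <;> omega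
  calc m = Fintype.card (Fin m) := (Fintype.card_fin m).symm
    _ ≤ Fintype.card (Fin n) := Fintype.card_le_of_injective _ hinj
    _ = n := Fintype.card_fin n

lemma arith (k n r s : ℕ) (hk : 1 ≤ k) (h9r : 9*(k+10) ≤ r) (h9s : 9*(k+10) ≤ s)
    (hrs5 : 5*k*n < r*s) (hrle : r ≤ s) (hrn : r ≤ n) :
    ∃ a : ℕ, 1 ≤ a ∧ k ≤ a ∧ a ≤ n ∧ k + a + 1 ≤ r ∧
      (k : ℤ) * ((n : ℤ) - 1) + ((a : ℤ) - (k : ℤ)) * ((a : ℤ) - 1)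
        < (a : ℤ) * ((s : ℤ) - 1) := by
  set q := Nat.sqrt (k*n) with hqdef
  have hq2 : q * q ≤ k * n := by
    have := Nat.sqrt_le' (k*n)
    simpa [pow_two] using this
  have hq3 : k * n < (q+1) * (q+1) := by
    have := Nat.lt_succ_sqrt' (k*n)
    simpa [pow_two, Nat.succ_eq_add_one] using this
  have hnk : k ≤ n := by omega
  have hqk : k ≤ q := Nat.le_sqrt.mpr (Nat.mul_le_mul_left k hnk)
  have hq9 : 9 ≤ q := by
    apply Nat.le_sqrt.mpr
    have h1 : n ≤ k*n := Nat.le_mul_of_pos_left n hk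
    omega
  have hqn : q ≤ n := by
    by_contra hc
    push_neg at hc
    have h1 : k*n ≤ n*n := Nat.mul_le_mul_right n hnk
    have h2 : (n+1)*(n+1) ≤ q*q := Nat.mul_le_mul (by omega) (by omega)
    have h3 : n*n < (n+1)*(n+1) := by nlinarith
    omega
  rcases le_or_gt (r - k - 1) q with hcase | hcase
  · refine ⟨r - k - 1, by omega, by omega, by omega, by omega, ?_⟩
    set b := r - k - 1 with hb
    have hbr : b + k + 1 = r := by omega
    have hbk : 7*k + 89 ≤ b := by omega
    have hbb : b*b ≤ k*n := le_trans (Nat.mul_le_mul hcase hcase) hq2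
    have h2 : 2*(k*n) ≤ b*s := by
      have h5b : 2*r ≤ 5*b := by omega
      have h1 : b*(5*k*n) ≤ b*(r*s) := Nat.mul_le_mul_left _ (by omega)
      have h2' : (2*r)*(k*n) ≤ (5*b)*(k*n) := Nat.mul_le_mul_right _ h5b
      have h3 : r*(2*(k*n)) = (2*r)*(k*n) := by ring
      have h4 : (5*b)*(k*n) = b*(5*k*n) := by ring
      have h5 : b*(r*s) = r*(b*s) := by ring
      have h6 : r*(2*(k*n)) ≤ r*(b*s) := by omega
      exact Nat.le_of_mul_le_mul_left h6 (by omega)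
    have hbbz : (b:ℤ)*(b:ℤ) ≤ (k:ℤ)*(n:ℤ) := by exact_mod_cast hbb
    have h2z : 2*((k:ℤ)*(n:ℤ)) ≤ (b:ℤ)*(s:ℤ) := by exact_mod_cast h2
    have hbz : (1:ℤ) ≤ (b:ℤ) := by exact_mod_cast (by omega : 1 ≤ b)
    have hkz : (1:ℤ) ≤ (k:ℤ) := by exact_mod_cast hk
    have hkb : (1:ℤ) ≤ (k:ℤ)*(b:ℤ) := by nlinarith
    nlinarith
  · refine ⟨q, by omega, hqk, hqn, by omega, ?_⟩
    have hs2q : 2*q + 3 ≤ s := by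
      by_contra hcon
      push_neg at hcon
      have h1 : r*s ≤ s*s := Nat.mul_le_mul_right s hrle
      have h2 : s*s ≤ (2*q+2)*(2*q+2) := Nat.mul_le_mul (by omega) (by omega)
      have h3 : 5*(q*q) ≤ 5*(k*n) := by omega
      have h4 : (2*q+2)*(2*q+2) = 4*(q*q) + 8*q + 4 := by ring
      have h5 : 9*q ≤ q*q := Nat.mul_le_mul_right q hq9
      have h6 : 5*k*n = 5*(k*n) := by ring
      omega
    have hknz : (k:ℤ)*(n:ℤ) < ((q:ℤ)+1)*((q:ℤ)+1) := by exact_mod_cast hq3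
    have hsz : 2*(q:ℤ) + 3 ≤ (s:ℤ) := by exact_mod_cast hs2q
    have hqkz : (k:ℤ) ≤ (q:ℤ) := by exact_mod_cast hqk
    have hkz : (1:ℤ) ≤ (k:ℤ) := by exact_mod_cast hk
    have hq9z : (9:ℤ) ≤ (q:ℤ) := by exact_mod_cast hq9
    have hmul : (q:ℤ)*(2*(q:ℤ)+3) ≤ (q:ℤ)*(s:ℤ) :=
      mul_le_mul_of_nonneg_left hsz (by linarith)
    nlinarith

lemma key {n k : ℕ} (hk : 1 ≤ k) (hn : 1 ≤ n) (c d : Fin (k+1) → Bool)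
    (i0 : Fin (k+1)) (hne : c i0 ≠ d i0) (huniq : ∀ j, j ≠ i0 → c j = d j)
    (r s : ℕ) (hr : 9*(k+10) ≤ r) (hs : 9*(k+10) ≤ s) (hrs : 5*k*n < r*s) (hrle : r ≤ s) :
    ∃ A : (Fin (k + 1) → Fin n) → Bool, IsHDPerm n k A ∧
      (¬ ∃ α : Fin r → (Fin (k + 1) → Fin n), IsCMonoSub n k r c A α) ∧
      (¬ ∃ α : Fin s → (Fin (k + 1) → Fin n), IsCMonoSub n k s d A α) := by
  have hdi : d i0 = !(c i0) := by
    cases hci : c i0 <;> cases hdi0 : d i0 <;> simp_all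
  rcases lt_or_ge n r with hnr | hrn
  · refine ⟨myA n k 1 c i0, myA_isHDPerm hn le_rfl c i0, ?_, ?_⟩
    · rintro ⟨α, _, hlt⟩
      have := chain_short c i0 α hlt
      omega
    · rintro ⟨α, _, hlt⟩
      have := chain_short d i0 α hlt
      omega
  · obtain ⟨a, ha1, hak, han, har, harith⟩ := arith k n r s hk hr hs hrs hrle hrn
    refine ⟨myA n k a c i0, myA_isHDPerm hn ha1 c i0, ?_, ?_⟩
    · rintro ⟨α, hA, hlt⟩
      refine no_c_chain hn ha1 c i0 har α hA ?_
      intro i j hij l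
      exact flipv_lt_flipv (hlt i j hij l)
    · rintro ⟨α, hA, hlt⟩
      refine no_d_chain hn ha1 hak han c i0 (by omega) harith α hA ?_ ?_
      · intro i j hij l hl
        have hlne : l ≠ i0 := Finset.ne_of_mem_erase hl
        rw [huniq l hlne]
        exact flipv_lt_flipv (hlt i j hij l)
      · intro i j hij
        have h := hlt i j hij i0
        rw [hdi] at h
        apply flipv_lt_flipv
        cases hci : c i0
        · rw [hci] at h
          simp only [Bool.not_false, if_true] at h
          simp only [Bool.false_eq_true, if_false]
          exact h
        · rw [hci] at h
          simp only [Bool.not_true, Bool.false_eq_true, if_false] at h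
          simp only [if_true]
          exact h

end HDES

/-- If `c, d ∈ {0,1}^{k+1}` differ in exactly one coordinate,
`r, s ≥ 9(k+10)` and `r s > 5 k n`, then some `A ∈ L_n^k` has no
`<_c`-monotone subsequence of length `r` and no `<_d`-monotone subsequence of
length `s`. -/
theorem hd_erdos_szekeres_general_upper (n k : ℕ) (hk : 1 ≤ k) (hn : 1 ≤ n)
    (c d : Fin (k + 1) → Bool) (hcd : ∃! i : Fin (k + 1), c i ≠ d i)
    (r s : ℕ) (hr : 9 * (k + 10) ≤ r) (hs : 9 * (k + 10) ≤ s)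
    (hrs : 5 * k * n < r * s) :
    ∃ A : (Fin (k + 1) → Fin n) → Bool, IsHDPerm n k A ∧
      (¬ ∃ α : Fin r → (Fin (k + 1) → Fin n), IsCMonoSub n k r c A α) ∧
      (¬ ∃ α : Fin s → (Fin (k + 1) → Fin n), IsCMonoSub n k s d A α) := by
  obtain ⟨i0, hne, huniq⟩ := hcd
  have huniq' : ∀ j, j ≠ i0 → c j = d j := by
    intro j hj
    by_contra hcj
    exact hj (huniq j hcj)
  rcases le_total r s with hle | hle
  · exact HDES.key hk hn c d i0 hne huniq' r s hr hs hrs hle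
  · have huniq'' : ∀ j, j ≠ i0 → d j = c j := fun j hj => (huniq' j hj).symm
    have hrs' : 5 * k * n < s * r := by
      calc 5 * k * n < r * s := hrs
        _ = s * r := mul_comm r s
    obtain ⟨A, h1, h2, h3⟩ := HDES.key hk hn d c i0 (Ne.symm hne) huniq'' s r hs hr hrs' hle
    exact ⟨A, h1, h3, h2⟩
end

section
/- Let n, k, m ≥ 1 and let α_1, α_2, …, α_m ∈ [n]^k be pairwise distinct positions. Then the number of A ∈ L_n^k satisfying f_A(α_1) < f_A(α_2) < … < f_A(α_m) is at most |L_n^k| / m!; equivalently, for A drawn uniformly at random from L_n^k, Pr[f_A(α_1) < f_A(α_2) < … < f_A(α_m)] ≤ 1/m!. -/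
open scoped Classical

/-- Relabel the last coordinate of `A` by the permutation `σ`. -/
noncomputable def relabel (n k : ℕ) (σ : Equiv.Perm (Fin n))
    (A : (Fin (k + 1) → Fin n) → Bool) : (Fin (k + 1) → Fin n) → Bool :=
  fun x => A (Function.update x (Fin.last k) (σ (x (Fin.last k))))

lemma relabel_update_last (n k : ℕ) (σ : Equiv.Perm (Fin n)) (A)
    (x : Fin (k + 1) → Fin n) (t : Fin n) :
    relabel n k σ A (Function.update x (Fin.last k) t)
      = A (Function.update x (Fin.last k) (σ t)) := by
  unfold relabel
  rw [Function.update_self, Function.update_idem]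

lemma relabel_snoc (n k : ℕ) (σ : Equiv.Perm (Fin n)) (A)
    (p : Fin k → Fin n) (s : Fin n) :
    relabel n k σ A (Fin.snoc p s) = A (Fin.snoc p (σ s)) := by
  unfold relabel
  rw [Fin.snoc_last, Fin.update_snoc_last]

lemma relabel_isHDPerm {n k : ℕ} {σ : Equiv.Perm (Fin n)} {A}
    (hA : IsHDPerm n k A) : IsHDPerm n k (relabel n k σ A) := by
  intro j x
  by_cases hj : j = Fin.last k
  · subst hj
    obtain ⟨s, hs, hu⟩ := hA (Fin.last k) x
    refine ⟨σ.symm s, ?_, ?_⟩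
    · show relabel n k σ A _ = true
      rw [relabel_update_last, Equiv.apply_symm_apply]; exact hs
    · intro y hy
      replace hy : A (Function.update x (Fin.last k) (σ y)) = true := by
        rw [← relabel_update_last n k σ A x y]; exact hy
      have := hu (σ y) hy
      exact σ.injective (by rw [this, Equiv.apply_symm_apply])
  · have key : ∀ t : Fin n, relabel n k σ A (Function.update x j t)
        = A (Function.update (Function.update x (Fin.last k) (σ (x (Fin.last k)))) j t) := by
      intro t
      unfold relabel
      rw [Function.update_of_ne (Ne.symm hj), Function.update_comm hj]
    obtain ⟨s, hs, hu⟩ := hA j (Function.update x (Fin.last k) (σ (x (Fin.last k))))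
    refine ⟨s, ?_, fun y hy => hu y ?_⟩
    · show relabel n k σ A _ = true
      rw [key]; exact hs
    · show A _ = true
      rw [← key]; exact hy

lemma relabel_recover (n k : ℕ) (σ : Equiv.Perm (Fin n)) (A)
    (x : Fin (k + 1) → Fin n) :
    relabel n k σ A (Function.update x (Fin.last k) (σ.symm (x (Fin.last k)))) = A x := by
  rw [relabel_update_last, Equiv.apply_symm_apply, Function.update_eq_self]

lemma line_unique {n k : ℕ} {A} (hA : IsHDPerm n k A) (p : Fin k → Fin n) {s s' : Fin n}
    (h : A (Fin.snoc p s) = true) (h' : A (Fin.snoc p s') = true) : s = s' := by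
  obtain ⟨u, _, hu⟩ := hA (Fin.last k) (Fin.snoc p s)
  have e : ∀ v : Fin n, Function.update (Fin.snoc p s) (Fin.last k) v
      = (Fin.snoc p v : Fin (k + 1) → Fin n) :=
    fun v => by rw [Fin.update_snoc_last]
  have hs : s = u := hu s (show A _ = true by rw [e s]; exact h)
  have hs' : s' = u := hu s' (show A _ = true by rw [e s']; exact h')
  rw [hs, hs']

noncomputable def tf (n k m : ℕ) (hn : 1 ≤ n) (a : Fin m → Fin k → Fin n)
    (A : (Fin (k + 1) → Fin n) → Bool) : Fin m → Fin n :=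
  if h : ∃ t : Fin m → Fin n, StrictMono t ∧ ∀ i : Fin m, A (Fin.snoc (a i) (t i)) = true
  then h.choose else fun _ => ⟨0, hn⟩

lemma tf_spec (n k m : ℕ) (hn : 1 ≤ n) (a : Fin m → Fin k → Fin n)
    (A : (Fin (k + 1) → Fin n) → Bool)
    (h : ∃ t : Fin m → Fin n, StrictMono t ∧ ∀ i : Fin m, A (Fin.snoc (a i) (t i)) = true) :
    StrictMono (tf n k m hn a A) ∧
      ∀ i : Fin m, A (Fin.snoc (a i) (tf n k m hn a A i)) = true := by
  unfold tf; rw [dif_pos h]; exact h.choose_spec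

noncomputable def σf (n k m : ℕ) (hn : 1 ≤ n) (a : Fin m → Fin k → Fin n)
    (π : Equiv.Perm (Fin m)) (A : (Fin (k + 1) → Fin n) → Bool) : Equiv.Perm (Fin n) :=
  if h : Function.Injective (tf n k m hn a A)
  then Equiv.Perm.viaFintypeEmbedding π⁻¹ ⟨tf n k m hn a A, h⟩ else 1

lemma σf_apply (n k m : ℕ) (hn : 1 ≤ n) (a : Fin m → Fin k → Fin n)
    (π : Equiv.Perm (Fin m)) (A : (Fin (k + 1) → Fin n) → Bool)
    (h : Function.Injective (tf n k m hn a A)) (j : Fin m) :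
    σf n k m hn a π A (tf n k m hn a A j) = tf n k m hn a A (π⁻¹ j) := by
  unfold σf; rw [dif_pos h]
  exact Equiv.Perm.viaFintypeEmbedding_apply_image π⁻¹ ⟨tf n k m hn a A, h⟩ j

/-- For pairwise distinct positions `α_1, …, α_m ∈ [n]^k`, the number of
`A ∈ L_n^k` with `f_A(α_1) < ⋯ < f_A(α_m)` is at most `|L_n^k| / m!`. -/
theorem prob_increasing (n k m : ℕ) (hn : 1 ≤ n) (hk : 1 ≤ k) (hm : 1 ≤ m)
    (a : Fin m → (Fin k → Fin n)) (ha : Function.Injective a) :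
    Nat.factorial m *
      ((HDPerms n k).filter (fun A => ∃ t : Fin m → Fin n, StrictMono t ∧
        ∀ i : Fin m, A (Fin.snoc (a i) (t i)) = true)).card
      ≤ (HDPerms n k).card := by
  classical
  set E := (HDPerms n k).filter (fun A => ∃ t : Fin m → Fin n, StrictMono t ∧
        ∀ i : Fin m, A (Fin.snoc (a i) (t i)) = true) with hE
  let Φ : Equiv.Perm (Fin m) × ((Fin (k + 1) → Fin n) → Bool) →
      ((Fin (k + 1) → Fin n) → Bool) :=
    fun p => relabel n k (σf n k m hn a p.1 p.2) p.2
  -- facts for members of E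
  have hmem : ∀ A ∈ E, IsHDPerm n k A ∧
      StrictMono (tf n k m hn a A) ∧
      ∀ i : Fin m, A (Fin.snoc (a i) (tf n k m hn a A i)) = true := by
    intro A hA
    obtain ⟨hA1, hA2⟩ := Finset.mem_filter.mp hA
    exact ⟨(Finset.mem_filter.mp hA1).2, tf_spec n k m hn a A hA2⟩
  have hval : ∀ π : Equiv.Perm (Fin m), ∀ A ∈ E, ∀ i : Fin m,
      Φ (π, A) (Fin.snoc (a i) (tf n k m hn a A (π i))) = true := by
    intro π A hA i
    obtain ⟨hA1, ht, ht2⟩ := hmem A hA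
    show relabel n k _ A _ = true
    rw [relabel_snoc, σf_apply n k m hn a π A ht.injective (π i),
      Equiv.Perm.inv_def, Equiv.symm_apply_apply]
    exact ht2 i
  have key : ((Finset.univ : Finset (Equiv.Perm (Fin m))) ×ˢ E).card
      ≤ (HDPerms n k).card := by
    apply Finset.card_le_card_of_injOn Φ
    · rintro ⟨π, A⟩ hp
      have hA : A ∈ E := (Finset.mem_product.mp hp).2
      exact Finset.mem_filter.mpr ⟨Finset.mem_univ _, relabel_isHDPerm (hmem A hA).1⟩
    · rintro ⟨π, A⟩ hp ⟨π', A'⟩ hp' heq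
      simp only [Finset.coe_product, Set.mem_prod, Finset.mem_coe] at hp hp'
      have hA : A ∈ E := hp.2
      have hA' : A' ∈ E := hp'.2
      obtain ⟨hHD, ht, ht2⟩ := hmem A hA
      obtain ⟨hHD', ht', ht2'⟩ := hmem A' hA'
      have hB : IsHDPerm n k (Φ (π, A)) := relabel_isHDPerm hHD
      -- the values agree
      have hvv : ∀ i : Fin m, tf n k m hn a A (π i) = tf n k m hn a A' (π' i) := by
        intro i
        have h1 := hval π A hA i
        have h2 := hval π' A' hA' i
        rw [← heq] at h2
        exact line_unique hB (a i) h1 h2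
      have hcomp : tf n k m hn a A ∘ π = tf n k m hn a A' ∘ π' := funext hvv
      have hrange : Set.range (tf n k m hn a A) = Set.range (tf n k m hn a A') := by
        rw [← π.surjective.range_comp (tf n k m hn a A), hcomp,
          π'.surjective.range_comp]
      haveI : WellFoundedLT (Fin m) := Finite.to_wellFoundedLT
      have htt : tf n k m hn a A = tf n k m hn a A' :=
        (StrictMono.range_inj ht ht').mp hrange
      have hππ : π = π' := Equiv.ext fun i => ht.injective (by rw [hvv i, ← htt])
      have hσσ : σf n k m hn a π A = σf n k m hn a π' A' := by
        simp only [σf, htt, hππ]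
      have hAA : A = A' := by
        funext x
        set y := Function.update x (Fin.last k)
          ((σf n k m hn a π A).symm (x (Fin.last k))) with hy
        have h1 := relabel_recover n k (σf n k m hn a π A) A x
        have h2 := relabel_recover n k (σf n k m hn a π' A') A' x
        rw [← hσσ] at h2
        have h3 : relabel n k (σf n k m hn a π A) A y
            = relabel n k (σf n k m hn a π' A') A' y := congrFun heq y
        rw [← hσσ] at h3
        exact h1.symm.trans (h3.trans h2)
      rw [Prod.mk.injEq]
      exact ⟨hππ, hAA⟩
  calc Nat.factorial m * E.card
      = ((Finset.univ : Finset (Equiv.Perm (Fin m))) ×ˢ E).card := by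
        rw [Finset.card_product, Finset.card_univ, Fintype.card_perm, Fintype.card_fin]
    _ ≤ (HDPerms n k).card := key
end

section
/- Let n, k, m ≥ 1. The number of A ∈ L_n^k that contain a sequence α^1, …, α^m of support positions that is strictly increasing in every one of the k+1 coordinates is at most |L_n^k| · C(n,m)^k / m!, where C(n,m) is the binomial coefficient. -/
open scoped Classical

section AuxCIS
open Finset Equiv

/-- Permutations fixing `m` given distinct points number at most `(n-m)!`. -/
lemma stab_card_le {n m : ℕ} (b : Fin m → Fin n) (hb : Function.Injective b) :
    (Finset.univ.filter (fun π : Equiv.Perm (Fin n) => ∀ i, π (b i) = b i)).card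
      ≤ (n - m).factorial := by
  set s : Finset (Fin n) := Finset.univ.image b with hs
  have hmem : ∀ (π : Equiv.Perm (Fin n)), (∀ i, π (b i) = b i) →
      ∀ x, (¬ x ∈ s) ↔ (¬ π x ∈ s) := by
    intro π hπ x
    constructor
    · intro hx hc
      rcases Finset.mem_image.1 hc with ⟨i, -, hi⟩
      have : x = b i := π.injective (by rw [hπ i]; exact hi.symm)
      exact hx (this ▸ Finset.mem_image_of_mem b (Finset.mem_univ i))
    · intro hx hc
      rcases Finset.mem_image.1 hc with ⟨i, -, hi⟩
      exact hx (by rw [← hi, hπ i]; exact Finset.mem_image_of_mem b (Finset.mem_univ i))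
  have hcard : Fintype.card {x : Fin n // ¬ x ∈ s} = n - m := by
    rw [Fintype.card_subtype_compl, Fintype.card_fin, Fintype.card_coe,
      Finset.card_image_of_injective _ hb, Finset.card_univ, Fintype.card_fin]
  have hinj : ∀ π ∈ Finset.univ.filter (fun π : Equiv.Perm (Fin n) => ∀ i, π (b i) = b i),
      ∀ π' ∈ Finset.univ.filter (fun π : Equiv.Perm (Fin n) => ∀ i, π (b i) = b i),
      (fun π : Equiv.Perm (Fin n) =>
        if h : ∀ i, π (b i) = b i then π.subtypePerm (p := fun x => ¬ x ∈ s) (fun x => (hmem π h x).symm) else 1) π =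
      (fun π : Equiv.Perm (Fin n) =>
        if h : ∀ i, π (b i) = b i then π.subtypePerm (p := fun x => ¬ x ∈ s) (fun x => (hmem π h x).symm) else 1) π' → π = π' := by
    intro π h1 π' h2 heq
    rw [Finset.mem_filter] at h1 h2
    simp only [dif_pos h1.2, dif_pos h2.2] at heq
    ext x
    by_cases hx : x ∈ s
    · rcases Finset.mem_image.1 hx with ⟨i, -, rfl⟩
      rw [h1.2, h2.2]
    · have h3 := congrArg (fun e => (e ⟨x, hx⟩ : {x : Fin n // ¬ x ∈ s})) heq
      have h4 := congrArg Subtype.val h3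
      simp only [Equiv.Perm.subtypePerm_apply] at h4
      rw [h4]
  calc (Finset.univ.filter (fun π : Equiv.Perm (Fin n) => ∀ i, π (b i) = b i)).card
      ≤ (Finset.univ : Finset (Equiv.Perm {x : Fin n // ¬ x ∈ s})).card :=
        Finset.card_le_card_of_injOn _ (fun _ _ => Finset.mem_univ _) hinj
    _ = (n - m).factorial := by rw [Finset.card_univ, Fintype.card_perm, hcard]

/-- Permutations sending given distinct points to prescribed values number at most `(n-m)!`. -/
lemma perm_constraint_card_le {n m : ℕ} (t b : Fin m → Fin n) (ht : Function.Injective t) :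
    (Finset.univ.filter (fun σ : Equiv.Perm (Fin n) => ∀ i, σ (t i) = b i)).card
      ≤ (n - m).factorial := by
  rcases Finset.eq_empty_or_nonempty
      (Finset.univ.filter (fun σ : Equiv.Perm (Fin n) => ∀ i, σ (t i) = b i)) with h | ⟨σ₀, hσ₀⟩
  · rw [h]; simp
  · rw [Finset.mem_filter] at hσ₀
    have hσ₀' := hσ₀.2
    have hbinj : Function.Injective b := by
      intro i j hij
      apply ht
      apply σ₀.injective
      rw [hσ₀' i, hσ₀' j, hij]
    -- map σ ↦ σ₀⁻¹ * σ into the stabilizer of t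
    have hsub : ∀ σ ∈ Finset.univ.filter (fun σ : Equiv.Perm (Fin n) => ∀ i, σ (t i) = b i),
        (σ₀⁻¹ * σ) ∈ Finset.univ.filter
          (fun π : Equiv.Perm (Fin n) => ∀ i, π (t i) = t i) := by
      intro σ hσ
      rw [Finset.mem_filter] at hσ ⊢
      refine ⟨Finset.mem_univ _, fun i => ?_⟩
      have : σ (t i) = σ₀ (t i) := by rw [hσ.2 i, hσ₀' i]
      simp [Equiv.Perm.mul_apply, this]
    calc (Finset.univ.filter (fun σ : Equiv.Perm (Fin n) => ∀ i, σ (t i) = b i)).card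
        ≤ (Finset.univ.filter
            (fun π : Equiv.Perm (Fin n) => ∀ i, π (t i) = t i)).card := by
          apply Finset.card_le_card_of_injOn (fun σ => σ₀⁻¹ * σ) hsub
          intro x _ y _ h
          exact mul_left_cancel h
      _ ≤ (n - m).factorial := stab_card_le t ht

lemma mem_HDPerms {n k : ℕ} {A : (Fin (k + 1) → Fin n) → Bool} :
    A ∈ HDPerms n k ↔ IsHDPerm n k A := by
  simp [HDPerms]

/-- Action of a permutation of symbols on coordinate 0. -/
def actPerm {n k : ℕ} (σ : Equiv.Perm (Fin n)) (A : (Fin (k + 1) → Fin n) → Bool) :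
    (Fin (k + 1) → Fin n) → Bool :=
  fun x => A (Function.update x 0 (σ (x 0)))

lemma actPerm_actPerm {n k : ℕ} (σ τ : Equiv.Perm (Fin n))
    (A : (Fin (k + 1) → Fin n) → Bool) :
    actPerm σ (actPerm (k := k) τ A) = actPerm (τ * σ) A := by
  funext x
  simp only [actPerm, Function.update_self, Function.update_idem, Equiv.Perm.mul_apply]

lemma actPerm_one {n k : ℕ} (A : (Fin (k + 1) → Fin n) → Bool) :
    actPerm (1 : Equiv.Perm (Fin n)) A = A := by
  funext x
  simp [actPerm, Function.update_eq_self]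

lemma isHDPerm_actPerm {n k : ℕ} (σ : Equiv.Perm (Fin n))
    (A : (Fin (k + 1) → Fin n) → Bool) (hA : IsHDPerm n k A) :
    IsHDPerm n k (actPerm σ A) := by
  intro j x
  by_cases hj : j = 0
  · subst hj
    obtain ⟨s, hs, hus⟩ := hA 0 x
    refine ⟨σ⁻¹ s, ?_, fun t ht => ?_⟩
    · show A (Function.update (Function.update x 0 (σ⁻¹ s)) 0
        (σ (Function.update x 0 (σ⁻¹ s) 0))) = true
      rw [Function.update_self, Function.update_idem, Equiv.Perm.coe_inv, Equiv.apply_symm_apply]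
      exact hs
    · have ht' : A (Function.update (Function.update x 0 t) 0
          (σ (Function.update x 0 t 0))) = true := ht
      rw [Function.update_self, Function.update_idem] at ht'
      have := hus (σ t) ht'
      rw [← this, Equiv.Perm.coe_inv, Equiv.symm_apply_apply]
  · have h0 : ∀ t : Fin n, Function.update x j t 0 = x 0 :=
      fun t => Function.update_of_ne (Ne.symm hj) _ _
    obtain ⟨s, hs, hus⟩ := hA j (Function.update x 0 (σ (x 0)))
    refine ⟨s, ?_, fun t ht => ?_⟩
    · show A (Function.update (Function.update x j s) 0
        (σ (Function.update x j s 0))) = true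
      rw [h0, Function.update_comm hj]
      exact hs
    · apply hus
      have ht' : A (Function.update (Function.update x j t) 0
          (σ (Function.update x j t 0))) = true := ht
      rwa [h0, Function.update_comm hj] at ht'

lemma card_filter_actPerm {n k m : ℕ} (σ : Equiv.Perm (Fin n))
    (β : Fin m → (Fin (k + 1) → Fin n)) :
    ((HDPerms n k).filter
        (fun A => ∀ i, actPerm σ A (β i) = true)).card
      = ((HDPerms n k).filter
        (fun A => ∀ i, A (β i) = true)).card := by
  apply Finset.card_bij' (fun A _ => actPerm σ A) (fun A _ => actPerm σ⁻¹ A)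
  · intro A hA
    have hA' := Finset.mem_filter.1 hA
    exact Finset.mem_filter.2
      ⟨mem_HDPerms.2 (isHDPerm_actPerm σ A (mem_HDPerms.1 hA'.1)), hA'.2⟩
  · intro A hA
    have hA' := Finset.mem_filter.1 hA
    refine Finset.mem_filter.2
      ⟨mem_HDPerms.2 (isHDPerm_actPerm σ⁻¹ A (mem_HDPerms.1 hA'.1)), fun i => ?_⟩
    rw [show actPerm σ (actPerm σ⁻¹ A) = A by
      rw [actPerm_actPerm, inv_mul_cancel, actPerm_one]]
    exact hA'.2 i
  · intro A _
    rw [actPerm_actPerm, mul_inv_cancel, actPerm_one]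
  · intro A _
    rw [actPerm_actPerm, inv_mul_cancel, actPerm_one]

lemma key_bound {n k m : ℕ} (β : Fin m → (Fin (k + 1) → Fin n))
    (hβ : Function.Injective fun i => β i 0) :
    ((HDPerms n k).filter
        (fun A => ∀ i, A (β i) = true)).card * n.factorial
      ≤ (HDPerms n k).card * (n - m).factorial := by
  set L := HDPerms n k with hL
  have h1 : (L.filter (fun A => ∀ i, A (β i) = true)).card * n.factorial
      = ∑ σ : Equiv.Perm (Fin n),
          (L.filter (fun A => ∀ i, actPerm σ A (β i) = true)).card := by
    rw [Finset.sum_congr rfl (fun σ _ => card_filter_actPerm σ β), Finset.sum_const,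
      Finset.card_univ, Fintype.card_perm, Fintype.card_fin, smul_eq_mul, mul_comm]
  rw [h1]
  calc ∑ σ : Equiv.Perm (Fin n),
        (L.filter (fun A => ∀ i, actPerm σ A (β i) = true)).card
      = ∑ A ∈ L, ∑ σ : Equiv.Perm (Fin n),
          (if (∀ i, actPerm σ A (β i) = true) then 1 else 0) := by
        rw [Finset.sum_congr rfl (fun σ _ => Finset.card_filter _ _)]
        exact Finset.sum_comm
    _ = ∑ A ∈ L, (Finset.univ.filter
          (fun σ : Equiv.Perm (Fin n) => ∀ i, actPerm σ A (β i) = true)).card :=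
        Finset.sum_congr rfl fun A _ => (Finset.card_filter _ _).symm
    _ ≤ ∑ _A ∈ L, (n - m).factorial := by
        refine Finset.sum_le_sum fun A hA => ?_
        have hHD : IsHDPerm n k A := mem_HDPerms.1 hA
        have hsub : Finset.univ.filter
            (fun σ : Equiv.Perm (Fin n) => ∀ i, actPerm σ A (β i) = true)
            ⊆ Finset.univ.filter (fun σ : Equiv.Perm (Fin n) =>
              ∀ i, σ (β i 0) = (hHD 0 (β i)).choose) := by
          intro σ hσ
          rw [Finset.mem_filter] at hσ ⊢
          refine ⟨Finset.mem_univ _, fun i => ?_⟩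
          exact (hHD 0 (β i)).choose_spec.2 _ (hσ.2 i)
        exact le_trans (Finset.card_le_card hsub)
          (perm_constraint_card_le _ _ hβ)
    _ = L.card * (n - m).factorial := by rw [Finset.sum_const, smul_eq_mul]

lemma card_strictMono_le (n m : ℕ) :
    (Finset.univ.filter (fun g : Fin m → Fin n => StrictMono g)).card ≤ n.choose m := by
  have hmaps : ∀ g ∈ Finset.univ.filter (fun g : Fin m → Fin n => StrictMono g),
      Finset.univ.image g ∈ Finset.powersetCard m (Finset.univ : Finset (Fin n)) := by
    intro g hg
    rw [Finset.mem_filter] at hg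
    rw [Finset.mem_powersetCard]
    exact ⟨Finset.subset_univ _, by
      rw [Finset.card_image_of_injective _ hg.2.injective, Finset.card_univ,
        Fintype.card_fin]⟩
  calc (Finset.univ.filter (fun g : Fin m → Fin n => StrictMono g)).card
      ≤ (Finset.powersetCard m (Finset.univ : Finset (Fin n))).card := by
        apply Finset.card_le_card_of_injOn _ hmaps
        intro f hf g hg heq
        rw [Finset.mem_coe, Finset.mem_filter] at hf hg
        have hcard : (Finset.univ.image f).card = m := by
          rw [Finset.card_image_of_injective _ hf.2.injective, Finset.card_univ,
            Fintype.card_fin]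
        have h1 : f = (Finset.univ.image f).orderEmbOfFin hcard :=
          Finset.orderEmbOfFin_unique hcard
            (fun x => Finset.mem_image_of_mem f (Finset.mem_univ x)) hf.2
        have heq' : Finset.univ.image f = Finset.univ.image g := heq
        have h2 : g = (Finset.univ.image f).orderEmbOfFin hcard :=
          Finset.orderEmbOfFin_unique hcard
            (fun x => by rw [heq']; exact Finset.mem_image_of_mem g (Finset.mem_univ x)) hg.2
        rw [h1, h2]
      _ = n.choose m := by
        rw [Finset.card_powersetCard, Finset.card_univ, Fintype.card_fin]

end AuxCIS

/-- The number of `A ∈ L_n^k` containing a sequence of `m` support positions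
strictly increasing in every coordinate is at most `|L_n^k| ⬝ C(n,m)^k / m!`. -/
theorem count_increasing_sequences (n k m : ℕ) (hn : 1 ≤ n) (hk : 1 ≤ k) (hm : 1 ≤ m) :
    (((HDPerms n k).filter (fun A => ∃ α : Fin m → (Fin (k + 1) → Fin n),
        (∀ i, A (α i) = true) ∧
          ∀ j : Fin (k + 1), StrictMono (fun i => α i j))).card : ℝ)
      ≤ ((HDPerms n k).card : ℝ) * (n.choose m : ℝ) ^ k / (Nat.factorial m : ℝ) := by
  by_cases hmn : m ≤ n
  · -- main case
    set Bad := (HDPerms n k).filter (fun A => ∃ α : Fin m → (Fin (k + 1) → Fin n),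
        (∀ i, A (α i) = true) ∧ ∀ j : Fin (k + 1), StrictMono (fun i => α i j)) with hBad
    set I := Finset.univ.filter
        (fun f : Fin (k + 1) → (Fin m → Fin n) => ∀ j, StrictMono (f j)) with hI
    have hcover : Bad ⊆ I.biUnion
        (fun f => (HDPerms n k).filter (fun A => ∀ i, A (fun j => f j i) = true)) := by
      intro A hA
      rw [hBad, Finset.mem_filter] at hA
      obtain ⟨hL, α, h1, h2⟩ := hA
      rw [Finset.mem_biUnion]
      refine ⟨fun j i => α i j, ?_, ?_⟩
      · rw [hI, Finset.mem_filter]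
        exact ⟨Finset.mem_univ _, h2⟩
      · rw [Finset.mem_filter]
        exact ⟨hL, fun i => h1 i⟩
    have hIcard : I.card ≤ (n.choose m) ^ (k + 1) := by
      have hIeq : I = Fintype.piFinset (fun _ : Fin (k + 1) =>
          Finset.univ.filter (fun g : Fin m → Fin n => StrictMono g)) := by
        ext f
        simp [hI, Fintype.mem_piFinset]
      rw [hIeq, Fintype.card_piFinset]
      calc ∏ _j : Fin (k + 1),
            (Finset.univ.filter (fun g : Fin m → Fin n => StrictMono g)).card
          ≤ ∏ _j : Fin (k + 1), n.choose m :=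
            Finset.prod_le_prod' fun _ _ => card_strictMono_le n m
        _ = (n.choose m) ^ (k + 1) := by
            rw [Finset.prod_const, Finset.card_univ, Fintype.card_fin]
    have hmain : Bad.card * n.factorial
        ≤ (n.choose m) ^ (k + 1) * ((HDPerms n k).card * (n - m).factorial) := by
      calc Bad.card * n.factorial
          ≤ (I.biUnion (fun f => (HDPerms n k).filter
              (fun A => ∀ i, A (fun j => f j i) = true))).card * n.factorial :=
            Nat.mul_le_mul_right _ (Finset.card_le_card hcover)
        _ ≤ (∑ f ∈ I, ((HDPerms n k).filter
              (fun A => ∀ i, A (fun j => f j i) = true)).card) * n.factorial :=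
            Nat.mul_le_mul_right _ Finset.card_biUnion_le
        _ = ∑ f ∈ I, ((HDPerms n k).filter
              (fun A => ∀ i, A (fun j => f j i) = true)).card * n.factorial :=
          by rw [Finset.sum_mul]
        _ ≤ ∑ f ∈ I, (HDPerms n k).card * (n - m).factorial := by
            refine Finset.sum_le_sum fun f hf => ?_
            rw [hI, Finset.mem_filter] at hf
            exact key_bound (fun i j => f j i) (hf.2 0).injective
        _ = I.card * ((HDPerms n k).card * (n - m).factorial) := by
            rw [Finset.sum_const, smul_eq_mul]
        _ ≤ (n.choose m) ^ (k + 1) * ((HDPerms n k).card * (n - m).factorial) :=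
            Nat.mul_le_mul_right _ hIcard
    -- pass to ℝ
    have HR : (Bad.card : ℝ) * (n.factorial : ℝ)
        ≤ ((n.choose m : ℝ)) ^ (k + 1) * (((HDPerms n k).card : ℝ) * ((n - m).factorial : ℝ)) := by
      exact_mod_cast hmain
    have hC : (0 : ℝ) < (n.choose m : ℝ) := by exact_mod_cast Nat.choose_pos hmn
    have hNM : (0 : ℝ) < ((n - m).factorial : ℝ) := by exact_mod_cast Nat.factorial_pos _
    have hM : (0 : ℝ) < (m.factorial : ℝ) := by exact_mod_cast Nat.factorial_pos _
    have hfacR : (n.factorial : ℝ)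
        = (n.choose m : ℝ) * ((m.factorial : ℝ) * ((n - m).factorial : ℝ)) := by
      have := Nat.choose_mul_factorial_mul_factorial hmn
      push_cast [← this]
      ring
    rw [le_div_iff₀ hM]
    apply le_of_mul_le_mul_right _ (mul_pos hC hNM)
    calc (Bad.card : ℝ) * (m.factorial : ℝ) * ((n.choose m : ℝ) * ((n - m).factorial : ℝ))
        = (Bad.card : ℝ) * (n.factorial : ℝ) := by rw [hfacR]; ring
      _ ≤ ((n.choose m : ℝ)) ^ (k + 1)
            * (((HDPerms n k).card : ℝ) * ((n - m).factorial : ℝ)) := HR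
      _ = ((HDPerms n k).card : ℝ) * (n.choose m : ℝ) ^ k
            * ((n.choose m : ℝ) * ((n - m).factorial : ℝ)) := by rw [pow_succ]; ring
  · -- m > n : the filter is empty and the RHS is 0
    push_neg at hmn
    have hempty : (HDPerms n k).filter (fun A => ∃ α : Fin m → (Fin (k + 1) → Fin n),
        (∀ i, A (α i) = true) ∧ ∀ j : Fin (k + 1), StrictMono (fun i => α i j)) = ∅ := by
      rw [Finset.filter_eq_empty_iff]
      rintro A - ⟨α, -, h2⟩
      have : m ≤ n := by
        have := Fintype.card_le_of_injective _ (h2 0).injective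
        simpa using this
      omega
    rw [hempty]
    have hch : (n.choose m : ℝ) = 0 := by
      rw [Nat.choose_eq_zero_of_lt hmn]; norm_num
    rw [hch, zero_pow (by omega : k ≠ 0)]
    simp
end

section
/- Let n ≥ 2, k ≥ 1, 1 ≤ m ≤ n, and let 1 ≤ i ≤ ⌊n/m⌋. Set D_i = {(i−1)m+1, (i−1)m+2, …, im}^{k+1} ⊆ [n]^{k+1}. Then the fraction of A ∈ L_n^k having at least one position α ∈ D_i with A(α) = 1 is at least (m^{k+1}/n) / (1 + m^{k+1}/(n−1)). -/
open scoped Classical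

section Aux

variable {n k : ℕ}

lemma mem_hdPerms {A : (Fin (k + 1) → Fin n) → Bool} :
    A ∈ HDPerms n k ↔ IsHDPerm n k A := by
  simp [HDPerms]

lemma exists_hdperm (hn : 0 < n) (k : ℕ) : ∃ A : (Fin (k + 1) → Fin n) → Bool, IsHDPerm n k A := by
  haveI : NeZero n := ⟨hn.ne'⟩
  refine ⟨fun x => decide ((∑ j, ((x j : ℕ) : ZMod n)) = 0), ?_⟩
  intro j x
  have hsum : ∀ t : Fin n,
      (∑ i, (((Function.update x j t i : Fin n) : ℕ) : ZMod n))
        = ((t : ℕ) : ZMod n) + ∑ i ∈ Finset.univ \ {j}, ((x i : ℕ) : ZMod n) := by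
    intro t
    have h1 : ∀ i, (((Function.update x j t i : Fin n) : ℕ) : ZMod n)
        = Function.update (fun i => ((x i : ℕ) : ZMod n)) j ((t : ℕ) : ZMod n) i :=
      fun i => (Function.apply_update (fun _ (a : Fin n) => ((a : ℕ) : ZMod n)) x j t i)
    rw [Finset.sum_congr rfl fun i _ => h1 i]
    exact Finset.sum_update_of_mem (Finset.mem_univ j) _ _
  set S : ZMod n := ∑ i ∈ Finset.univ \ {j}, ((x i : ℕ) : ZMod n) with hS
  refine ⟨⟨(-S).val, ZMod.val_lt _⟩, ?_, ?_⟩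
  · simp only [decide_eq_true_eq, hsum]
    rw [ZMod.natCast_rightInverse (-S)]
    simp
  · intro t ht
    simp only [decide_eq_true_eq, hsum] at ht
    have h2 : ((t : ℕ) : ZMod n) = -S := by linear_combination ht
    apply Fin.ext
    have := congrArg ZMod.val h2
    rwa [ZMod.val_cast_of_lt t.isLt] at this

/-- transformation by permuting values along coordinate `j`. -/
def tr (j : Fin (k + 1)) (σ : Equiv.Perm (Fin n))
    (A : (Fin (k + 1) → Fin n) → Bool) : (Fin (k + 1) → Fin n) → Bool :=
  fun x => A (Function.update x j (σ (x j)))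

lemma tr_tr (j : Fin (k + 1)) (σ τ : Equiv.Perm (Fin n)) (A : (Fin (k + 1) → Fin n) → Bool) :
    tr j σ (tr j τ A) = tr j (τ * σ) A := by
  funext x
  simp [tr, Function.update_idem, Equiv.Perm.mul_apply]

lemma tr_one (j : Fin (k + 1)) (A : (Fin (k + 1) → Fin n) → Bool) : tr j 1 A = A := by
  funext x; simp [tr]

lemma isHDPerm_tr {A : (Fin (k + 1) → Fin n) → Bool} (hA : IsHDPerm n k A)
    (j : Fin (k + 1)) (σ : Equiv.Perm (Fin n)) : IsHDPerm n k (tr j σ A) := by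
  intro j' x
  by_cases h : j' = j
  · subst h
    obtain ⟨t', ht', hu⟩ := hA j' x
    refine ⟨σ⁻¹ t', ?_, ?_⟩
    · simpa [tr, Function.update_idem] using ht'
    · intro s hs
      simp only [tr, Function.update_idem, Function.update_self] at hs
      have := hu (σ s) hs
      simp [← this]
  · obtain ⟨t', ht', hu⟩ := hA j' (Function.update x j (σ (x j)))
    have key : ∀ t : Fin n, Function.update (Function.update x j' t) j (σ ((Function.update x j' t) j))
        = Function.update (Function.update x j (σ (x j))) j' t := by
      intro t
      rw [Function.update_of_ne (Ne.symm h), Function.update_comm (Ne.symm h)]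
    refine ⟨t', ?_, ?_⟩
    · simpa [tr, key] using ht'
    · intro s hs
      simp only [tr, key] at hs
      exact hu s hs

lemma sum_card_filter_line (S : Finset ((Fin (k + 1) → Fin n) → Bool))
    (hS : ∀ A ∈ S, IsHDPerm n k A) (j : Fin (k + 1)) (β : Fin (k + 1) → Fin n) :
    ∑ t : Fin n, (S.filter (fun A => A (Function.update β j t) = true)).card = S.card := by
  simp only [Finset.card_filter]
  rw [Finset.sum_comm]
  rw [Finset.card_eq_sum_ones S]
  refine Finset.sum_congr rfl fun A hA => ?_
  obtain ⟨t₀, h1, h2⟩ := hS A hA j β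
  have h3 : ∀ t : Fin n, (A (Function.update β j t) = true) ↔ t = t₀ :=
    fun t => ⟨fun h => h2 t h, fun h => h ▸ h1⟩
  simp [h3]

lemma card_filter_update_eq (j : Fin (k + 1)) (β : Fin (k + 1) → Fin n)
    (p : ((Fin (k + 1) → Fin n) → Bool) → Prop) (t s : Fin n)
    (hp : ∀ A, IsHDPerm n k A → (p A ↔ p (tr j (Equiv.swap t s) A))) :
    ((HDPerms n k).filter (fun A => p A ∧ A (Function.update β j t) = true)).card =
    ((HDPerms n k).filter (fun A => p A ∧ A (Function.update β j s) = true)).card := by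
  set σ := Equiv.swap t s with hσ
  have hσσ : σ * σ = 1 := Equiv.swap_mul_self t s
  have hval : ∀ (A : (Fin (k + 1) → Fin n) → Bool) (u v : Fin n), σ v = u →
      tr j σ A (Function.update β j v) = A (Function.update β j u) := by
    intro A u v huv
    simp only [tr, Function.update_self, Function.update_idem, huv]
  refine Finset.card_nbij' (tr j σ) (tr j σ) ?_ ?_ ?_ ?_
  · intro A hA
    rw [Finset.mem_coe, Finset.mem_filter] at hA ⊢
    obtain ⟨hmem, hpA, hAt⟩ := hA
    rw [mem_hdPerms] at hmem
    refine ⟨mem_hdPerms.mpr (isHDPerm_tr hmem j σ), (hp A hmem).mp hpA, ?_⟩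
    rw [hval A t s (Equiv.swap_apply_right t s), hAt]
  · intro A hA
    rw [Finset.mem_coe, Finset.mem_filter] at hA ⊢
    obtain ⟨hmem, hpA, hAs⟩ := hA
    rw [mem_hdPerms] at hmem
    refine ⟨mem_hdPerms.mpr (isHDPerm_tr hmem j σ), (hp A hmem).mp hpA, ?_⟩
    rw [hval A s t (Equiv.swap_apply_left t s), hAs]
  · intro A _
    rw [tr_tr, hσσ, tr_one]
  · intro A _
    rw [tr_tr, hσσ, tr_one]

lemma n_mul_card_filter (α : Fin (k + 1) → Fin n) :
    n * ((HDPerms n k).filter (fun A => A α = true)).card = (HDPerms n k).card := by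
  set j : Fin (k + 1) := 0
  have hpart := sum_card_filter_line (HDPerms n k) (fun A hA => mem_hdPerms.mp hA) j α
  have heq : ∀ t : Fin n,
      ((HDPerms n k).filter (fun A => A (Function.update α j t) = true)).card
        = ((HDPerms n k).filter (fun A => A (Function.update α j (α j)) = true)).card := by
    intro t
    have := card_filter_update_eq j α (fun _ => True) t (α j) (fun A _ => Iff.rfl)
    simpa using this
  rw [Finset.sum_congr rfl (fun t _ => heq t)] at hpart
  simp only [Function.update_eq_self] at hpart
  rw [Finset.sum_const, Finset.card_univ, Fintype.card_fin, smul_eq_mul] at hpart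
  exact hpart

lemma pair_bound (α β : Fin (k + 1) → Fin n) (hne : α ≠ β) :
    (n - 1) * ((HDPerms n k).filter (fun A => A α = true ∧ A β = true)).card
      ≤ ((HDPerms n k).filter (fun A => A α = true)).card := by
  obtain ⟨j, hj⟩ : ∃ j, α j ≠ β j := by
    by_contra h
    push_neg at h
    exact hne (funext h)
  set c : Fin n → ℕ := fun t =>
    ((HDPerms n k).filter (fun A => A α = true ∧ A (Function.update β j t) = true)).card with hc
  have hpart : ∑ t : Fin n, c t = ((HDPerms n k).filter (fun A => A α = true)).card := by
    have h := sum_card_filter_line ((HDPerms n k).filter (fun A => A α = true))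
      (fun A hA => mem_hdPerms.mp (Finset.mem_filter.mp hA).1) j β
    simpa [Finset.filter_filter] using h
  have heq : ∀ t : Fin n, t ≠ α j → c t = c (β j) := by
    intro t ht
    have hkey : ∀ A, IsHDPerm n k A → ((A α = true) ↔ (tr j (Equiv.swap t (β j)) A α = true)) := by
      intro A _
      have h2 : Equiv.swap t (β j) (α j) = α j :=
        Equiv.swap_apply_of_ne_of_ne (Ne.symm ht) hj
      have h1 : tr j (Equiv.swap t (β j)) A α = A α := by
        simp [tr, h2]
      rw [h1]
    have hres := card_filter_update_eq j β (fun A => A α = true) t (β j) hkey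
    simp only [hc]
    convert hres using 3
  have hsub : ∑ t ∈ Finset.univ.erase (α j), c t ≤ ∑ t : Fin n, c t :=
    Finset.sum_le_sum_of_subset (Finset.subset_univ _)
  have hconst : ∑ t ∈ Finset.univ.erase (α j), c t = (n - 1) * c (β j) := by
    rw [Finset.sum_congr rfl (fun t ht => heq t (Finset.ne_of_mem_erase ht))]
    rw [Finset.sum_const, Finset.card_erase_of_mem (Finset.mem_univ _),
      Finset.card_univ, Fintype.card_fin, smul_eq_mul]
  have hcb : c (β j) = ((HDPerms n k).filter (fun A => A α = true ∧ A β = true)).card := by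
    simp [hc, Function.update_eq_self]
  rw [← hpart, ← hcb]
  rw [← hconst]
  exact hsub

end Aux

/-- For the diagonal subcube `D_i = {(i-1)m+1, …, im}^{k+1}`, the fraction of
`A ∈ L_n^k` whose support meets `D_i` is at least
`(m^{k+1}/n) / (1 + m^{k+1}/(n-1))`. -/
theorem diagonal_cube_hit_probability (n k m i : ℕ) (hn : 2 ≤ n) (hk : 1 ≤ k)
    (hm1 : 1 ≤ m) (hmn : m ≤ n) (hi1 : 1 ≤ i) (hi2 : i ≤ n / m) :
    ((m : ℝ) ^ (k + 1) / (n : ℝ)) / (1 + (m : ℝ) ^ (k + 1) / ((n : ℝ) - 1))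
      ≤ (((HDPerms n k).filter (fun A => ∃ α : Fin (k + 1) → Fin n,
          (∀ j, (i - 1) * m ≤ (α j : ℕ) ∧ (α j : ℕ) < i * m) ∧ A α = true)).card : ℝ)
        / ((HDPerms n k).card : ℝ) := by
  classical
  have hn0 : 0 < n := by omega
  have hNpos : 0 < (HDPerms n k).card := by
    obtain ⟨A, hA⟩ := exists_hdperm hn0 k
    exact Finset.card_pos.mpr ⟨A, mem_hdPerms.mpr hA⟩
  set L := HDPerms n k with hLdef
  set D : Finset (Fin (k + 1) → Fin n) :=
    Finset.univ.filter (fun α => ∀ j, (i - 1) * m ≤ (α j : ℕ) ∧ (α j : ℕ) < i * m) with hDdef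
  have him : i * m ≤ n := (Nat.le_div_iff_mul_le (by omega : 0 < m)).mp hi2
  have hM1 : 1 ≤ m ^ (k + 1) := Nat.one_le_pow _ _ (by omega)
  have hIcard : (Finset.univ.filter
      (fun a : Fin n => (i - 1) * m ≤ (a : ℕ) ∧ (a : ℕ) < i * m)).card = m := by
    have hcard : (Finset.Ico ((i - 1) * m) (i * m)).card = m := by
      rw [Nat.card_Ico]
      have h1 : (i - 1) * m = i * m - m := by rw [Nat.sub_mul, one_mul]
      have h2 : m ≤ i * m := Nat.le_mul_of_pos_left m (by omega)
      omega
    refine Eq.trans ?_ hcard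
    refine Finset.card_nbij (fun a => (a : ℕ)) ?_ ?_ ?_
    · intro a ha
      simp only [Finset.mem_coe, Finset.mem_filter, Finset.mem_univ, true_and] at ha
      simpa [Finset.mem_Ico] using ha
    · exact Fin.val_injective.injOn
    · intro b hb
      simp only [Finset.coe_Ico, Set.mem_Ico] at hb
      refine ⟨⟨b, lt_of_lt_of_le hb.2 him⟩, ?_, rfl⟩
      simp [hb.1, hb.2]
  have hDcard : D.card = m ^ (k + 1) := by
    have hDeq : D = Fintype.piFinset (fun _ : Fin (k + 1) =>
        Finset.univ.filter (fun a : Fin n => (i - 1) * m ≤ (a : ℕ) ∧ (a : ℕ) < i * m)) := by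
      ext f
      simp [hDdef, Fintype.mem_piFinset]
    rw [hDeq, Fintype.card_piFinset]
    simp [hIcard]
  set X : ((Fin (k + 1) → Fin n) → Bool) → ℕ :=
    fun A => (D.filter (fun α => A α = true)).card with hXdef
  -- first moment
  have hQ : n * (∑ A ∈ L, X A) = m ^ (k + 1) * L.card := by
    have hswap : ∑ A ∈ L, X A = ∑ α ∈ D, (L.filter (fun A => A α = true)).card := by
      simp only [hXdef, Finset.card_filter]
      exact Finset.sum_comm
    rw [hswap, Finset.mul_sum, Finset.sum_congr rfl (fun α _ => n_mul_card_filter α),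
      Finset.sum_const, hDcard, smul_eq_mul]
  -- second moment
  have hsum2 : ∑ A ∈ L, (X A) ^ 2
      = ∑ α ∈ D, ∑ β ∈ D, (L.filter (fun A => A α = true ∧ A β = true)).card := by
    have hsq : ∀ A, (X A) ^ 2
        = ∑ α ∈ D, ∑ β ∈ D, (if A α = true ∧ A β = true then 1 else 0) := by
      intro A
      simp only [hXdef, Finset.card_filter, sq]
      rw [Finset.sum_mul_sum]
      refine Finset.sum_congr rfl fun α _ => Finset.sum_congr rfl fun β _ => ?_
      by_cases h1 : A α = true <;> by_cases h2 : A β = true <;> simp [h1, h2]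
    rw [Finset.sum_congr rfl (fun A _ => hsq A), Finset.sum_comm]
    refine Finset.sum_congr rfl fun α _ => ?_
    rw [Finset.sum_comm]
    exact Finset.sum_congr rfl fun β _ => (Finset.card_filter _ _).symm
  have hR : n * (n - 1) * (∑ A ∈ L, (X A) ^ 2)
      ≤ ((n - 1) * m ^ (k + 1) + m ^ (k + 1) * (m ^ (k + 1) - 1)) * L.card := by
    have hdiag : ∀ α : Fin (k + 1) → Fin n,
        n * (n - 1) * (L.filter (fun A => A α = true ∧ A α = true)).card
          = (n - 1) * L.card := by
      intro α
      have h1 : (L.filter (fun A => A α = true ∧ A α = true))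
          = L.filter (fun A => A α = true) := by
        refine Finset.filter_congr fun A _ => by simp
      rw [h1, mul_comm n (n - 1), mul_assoc, n_mul_card_filter α]
    have hoff : ∀ α β : Fin (k + 1) → Fin n, α ≠ β →
        n * (n - 1) * (L.filter (fun A => A α = true ∧ A β = true)).card ≤ L.card := by
      intro α β hαβ
      calc n * (n - 1) * (L.filter (fun A => A α = true ∧ A β = true)).card
          = n * ((n - 1) * (L.filter (fun A => A α = true ∧ A β = true)).card) := by ring
        _ ≤ n * (L.filter (fun A => A α = true)).card :=
            Nat.mul_le_mul_left _ (pair_bound α β hαβ)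
        _ = L.card := n_mul_card_filter α
    calc n * (n - 1) * (∑ A ∈ L, (X A) ^ 2)
        = ∑ α ∈ D, (n * (n - 1) * (L.filter (fun A => A α = true ∧ A α = true)).card
            + ∑ β ∈ D.erase α, n * (n - 1) * (L.filter (fun A => A α = true ∧ A β = true)).card) := by
          rw [hsum2, Finset.mul_sum]
          refine Finset.sum_congr rfl fun α hα => ?_
          rw [← Finset.add_sum_erase D _ hα, Nat.mul_add, Finset.mul_sum]
      _ ≤ ∑ α ∈ D, ((n - 1) * L.card + (m ^ (k + 1) - 1) * L.card) := by
          refine Finset.sum_le_sum fun α hα => ?_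
          refine add_le_add (le_of_eq (hdiag α)) ?_
          calc ∑ β ∈ D.erase α, n * (n - 1) * (L.filter (fun A => A α = true ∧ A β = true)).card
              ≤ ∑ _β ∈ D.erase α, L.card :=
                Finset.sum_le_sum fun β hβ => hoff α β (Finset.ne_of_mem_erase hβ).symm
            _ = (m ^ (k + 1) - 1) * L.card := by
                rw [Finset.sum_const, Finset.card_erase_of_mem hα, hDcard, smul_eq_mul]
      _ = ((n - 1) * m ^ (k + 1) + m ^ (k + 1) * (m ^ (k + 1) - 1)) * L.card := by
          rw [Finset.sum_const, hDcard, smul_eq_mul]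
          ring
  -- restrict to the support-hitting set
  set S := L.filter (fun A => ∃ α : Fin (k + 1) → Fin n,
      (∀ j, (i - 1) * m ≤ (α j : ℕ) ∧ (α j : ℕ) < i * m) ∧ A α = true) with hSdef
  have hS0 : ∀ A ∈ L, X A ≠ 0 → (∃ α : Fin (k + 1) → Fin n,
      (∀ j, (i - 1) * m ≤ (α j : ℕ) ∧ (α j : ℕ) < i * m) ∧ A α = true) := by
    intro A _ hXA
    obtain ⟨α, hα⟩ := Finset.card_pos.mp (Nat.pos_of_ne_zero hXA)
    rw [Finset.mem_filter] at hα
    have hmem := hα.1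
    rw [hDdef, Finset.mem_filter] at hmem
    exact ⟨α, hmem.2, hα.2⟩
  have hQS : ∑ A ∈ S, X A = ∑ A ∈ L, X A := Finset.sum_filter_of_ne hS0
  have hRS : ∑ A ∈ S, (X A) ^ 2 = ∑ A ∈ L, (X A) ^ 2 :=
    Finset.sum_filter_of_ne (fun A hA h => hS0 A hA (by
      intro h0
      exact h (by rw [h0]; ring)))
  -- Cauchy–Schwarz
  have hCS : ((∑ A ∈ L, X A : ℕ) : ℝ) ^ 2
      ≤ (S.card : ℝ) * ((∑ A ∈ L, (X A) ^ 2 : ℕ) : ℝ) := by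
    rw [← hQS, ← hRS]
    push_cast
    exact sq_sum_le_card_mul_sum_sq
  -- real arithmetic
  set NR : ℝ := (L.card : ℝ) with hNR
  set sR : ℝ := (S.card : ℝ) with hsR
  set MR : ℝ := (m : ℝ) ^ (k + 1) with hMR
  set QR : ℝ := ((∑ A ∈ L, X A : ℕ) : ℝ) with hQR
  set RR : ℝ := ((∑ A ∈ L, (X A) ^ 2 : ℕ) : ℝ) with hRR
  have hnR : (0 : ℝ) < n := by exact_mod_cast hn0
  have hn1R : (0 : ℝ) < (n : ℝ) - 1 := by
    have : (2 : ℝ) ≤ n := by exact_mod_cast hn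
    linarith
  have hMpos : (0 : ℝ) < MR := by rw [hMR]; positivity
  have hNRpos : (0 : ℝ) < NR := by rw [hNR]; exact_mod_cast hNpos
  have hs0 : (0 : ℝ) ≤ sR := by rw [hsR]; exact Nat.cast_nonneg _
  have f1 : (n : ℝ) * QR = MR * NR := by
    rw [hQR, hMR, hNR]
    exact_mod_cast hQ
  have f2 : (n : ℝ) * ((n : ℝ) - 1) * RR ≤ (((n : ℝ) - 1) * MR + MR * (MR - 1)) * NR := by
    have h1 : ((n - 1 : ℕ) : ℝ) = (n : ℝ) - 1 := by
      rw [Nat.cast_sub hn0]; norm_num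
    have h2 : ((m ^ (k + 1) - 1 : ℕ) : ℝ) = (m : ℝ) ^ (k + 1) - 1 := by
      rw [Nat.cast_sub hM1]; push_cast; ring
    have hcast := (Nat.cast_le (α := ℝ)).mpr hR
    rw [Nat.cast_mul, Nat.cast_mul, Nat.cast_mul, Nat.cast_add, Nat.cast_mul, Nat.cast_mul,
      h1, h2] at hcast
    rw [hRR, hMR, hNR]
    push_cast at hcast ⊢
    linarith [hcast]
  have f3 : QR ^ 2 ≤ sR * RR := hCS
  -- combine
  have k1 : QR ^ 2 * ((n : ℝ) * ((n : ℝ) - 1))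
      ≤ sR * ((((n : ℝ) - 1) * MR + MR * (MR - 1)) * NR) := by
    calc QR ^ 2 * ((n : ℝ) * ((n : ℝ) - 1))
        ≤ (sR * RR) * ((n : ℝ) * ((n : ℝ) - 1)) :=
          mul_le_mul_of_nonneg_right f3 (by positivity)
      _ = sR * ((n : ℝ) * ((n : ℝ) - 1) * RR) := by ring
      _ ≤ sR * ((((n : ℝ) - 1) * MR + MR * (MR - 1)) * NR) :=
          mul_le_mul_of_nonneg_left f2 hs0
  have k2 : (MR * NR) ^ 2 * ((n : ℝ) - 1)
      ≤ sR * ((((n : ℝ) - 1) * MR + MR * (MR - 1)) * NR) * (n : ℝ) := by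
    calc (MR * NR) ^ 2 * ((n : ℝ) - 1)
        = QR ^ 2 * ((n : ℝ) * ((n : ℝ) - 1)) * (n : ℝ) := by rw [← f1]; ring
      _ ≤ sR * ((((n : ℝ) - 1) * MR + MR * (MR - 1)) * NR) * (n : ℝ) :=
          mul_le_mul_of_nonneg_right k1 hnR.le
  have hMN : (0 : ℝ) < MR * NR := mul_pos hMpos hNRpos
  have key : MR * NR * ((n : ℝ) - 1) ≤ sR * (n : ℝ) * (((n : ℝ) - 1) + MR) := by
    have e1 : sR * ((((n : ℝ) - 1) * MR + MR * (MR - 1)) * NR) * (n : ℝ)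
        = (MR * NR) * (sR * (n : ℝ) * ((n : ℝ) - 2 + MR)) := by ring
    have e2 : (MR * NR) ^ 2 * ((n : ℝ) - 1)
        = (MR * NR) * (MR * NR * ((n : ℝ) - 1)) := by ring
    have le2 : MR * NR * ((n : ℝ) - 1) ≤ sR * (n : ℝ) * ((n : ℝ) - 2 + MR) := by
      have le1 : (MR * NR) * (MR * NR * ((n : ℝ) - 1))
          ≤ (MR * NR) * (sR * (n : ℝ) * ((n : ℝ) - 2 + MR)) := by
        rw [← e2, ← e1]; exact k2
      exact le_of_mul_le_mul_left le1 hMN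
    have le3 : sR * (n : ℝ) * ((n : ℝ) - 2 + MR) ≤ sR * (n : ℝ) * (((n : ℝ) - 1) + MR) := by
      have h : ((n : ℝ) - 2 + MR) ≤ (((n : ℝ) - 1) + MR) := by linarith
      exact mul_le_mul_of_nonneg_left h (mul_nonneg hs0 hnR.le)
    linarith
  have h01 : (n : ℝ) ≠ 0 := ne_of_gt hnR
  have h02 : (n : ℝ) - 1 ≠ 0 := ne_of_gt hn1R
  have hL2gen : ∀ a b M' : ℝ, a ≠ 0 → b ≠ 0 → M' / a / (1 + M' / b) = (M' * b) / (a * (b + M')) := by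
    intro a b M' ha hb
    field_simp
  have hL2 : MR / (n : ℝ) / (1 + MR / ((n : ℝ) - 1))
      = (MR * ((n : ℝ) - 1)) / ((n : ℝ) * (((n : ℝ) - 1) + MR)) :=
    hL2gen _ _ _ h01 h02
  have hpos2 : (0 : ℝ) < (n : ℝ) * (((n : ℝ) - 1) + MR) :=
    mul_pos hnR (by linarith)
  rw [hL2, div_le_div_iff₀ hpos2 hNRpos]
  nlinarith [key]
end

section
/- Let n, k ≥ 1, let s ≤ n, and let β^1, …, β^s ∈ [n]^{k+1} be positions whose first coordinates β^1_1, …, β^s_1 are pairwise distinct. Then |{A ∈ L_n^k : A(β^i) = 1 for all 1 ≤ i ≤ s}| ≤ |L_n^k| · (n−s)!/n!. -/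
open scoped Classical

namespace DistinctAux

variable {n k : ℕ}

def act (σ : Equiv.Perm (Fin n)) (A : (Fin (k + 1) → Fin n) → Bool) :
    (Fin (k + 1) → Fin n) → Bool :=
  fun x => A (Function.update x 0 (σ (x 0)))

lemma act_act (σ τ : Equiv.Perm (Fin n)) (A : (Fin (k + 1) → Fin n) → Bool) :
    act σ (act τ A) = act (τ * σ) A := by
  funext x
  simp [act, Function.update_self, Function.update_idem]

lemma act_one (A : (Fin (k + 1) → Fin n) → Bool) :
    act (1 : Equiv.Perm (Fin n)) A = A := by
  funext x
  simp [act, Function.update_eq_self]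

lemma isHDPerm_act {A : (Fin (k + 1) → Fin n) → Bool} (σ : Equiv.Perm (Fin n))
    (hA : IsHDPerm n k A) : IsHDPerm n k (act σ A) := by
  intro j x
  by_cases hj : j = 0
  · subst hj
    obtain ⟨u, hu, huniq⟩ := hA 0 x
    refine ⟨σ.symm u, ?_, ?_⟩
    · show A _ = true
      simpa [act, Function.update_self, Function.update_idem] using hu
    · intro t ht
      have h2 : A (Function.update x 0 (σ t)) = true := by
        simpa [act, Function.update_self, Function.update_idem] using ht
      have h3 := huniq _ h2
      rw [← h3, Equiv.symm_apply_apply]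
  · have h0 : ∀ t, act σ A (Function.update x j t) =
        A (Function.update (Function.update x 0 (σ (x 0))) j t) := by
      intro t
      have h1 : (Function.update x j t) 0 = x 0 := Function.update_of_ne (Ne.symm hj) _ _
      simp [act, h1, Function.update_comm hj]
    obtain ⟨u, hu, huniq⟩ := hA j (Function.update x 0 (σ (x 0)))
    refine ⟨u, ?_, ?_⟩
    · show act σ A (Function.update x j u) = true
      rw [h0]; exact hu
    · intro t ht
      have ht' : act σ A (Function.update x j t) = true := ht
      rw [h0] at ht'
      exact huniq t ht'

lemma act_mem {A : (Fin (k + 1) → Fin n) → Bool} (σ : Equiv.Perm (Fin n))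
    (hA : A ∈ HDPerms n k) : act σ A ∈ HDPerms n k := by
  simp only [HDPerms, Finset.mem_filter, Finset.mem_univ, true_and] at *
  exact isHDPerm_act σ hA

lemma card_filter_act {s : ℕ} (σ : Equiv.Perm (Fin n)) (β : Fin s → Fin (k + 1) → Fin n) :
    ((HDPerms n k).filter fun A => ∀ i, act σ A (β i) = true).card
      = ((HDPerms n k).filter fun A => ∀ i, A (β i) = true).card := by
  refine Finset.card_bij' (fun A _ => act σ A) (fun B _ => act σ.symm B) ?_ ?_ ?_ ?_
  · intro A hA
    rw [Finset.mem_filter] at hA ⊢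
    exact ⟨act_mem σ hA.1, hA.2⟩
  · intro B hB
    rw [Finset.mem_filter] at hB ⊢
    refine ⟨act_mem σ.symm hB.1, ?_⟩
    have : act σ (act σ.symm B) = B := by
      rw [act_act]
      simp [act_one, Equiv.Perm.symm_mul]
    intro i
    rw [this]
    exact hB.2 i
  · intro A hA
    show act σ.symm (act σ A) = A
    rw [act_act]
    simp [act_one, Equiv.Perm.mul_symm]
  · intro B hB
    show act σ (act σ.symm B) = B
    rw [act_act]
    simp [act_one, Equiv.Perm.symm_mul]

lemma card_perm_filter_le {s : ℕ} (g t : Fin s → Fin n) (hg : Function.Injective g) :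
    (Finset.univ.filter fun σ : Equiv.Perm (Fin n) => ∀ i, σ (g i) = t i).card
      ≤ Nat.factorial (n - s) := by
  by_cases hex : ∃ σ₀ : Equiv.Perm (Fin n), ∀ i, σ₀ (g i) = t i
  · obtain ⟨σ₀, hσ₀⟩ := hex
    have ht : Function.Injective t := by
      intro i j hij
      apply hg
      apply σ₀.injective
      rw [hσ₀ i, hσ₀ j, hij]
    have hcg : Fintype.card {x : Fin n // x ∉ Set.range g} = n - s := by
      rw [Fintype.card_subtype_compl]
      congr 1
      · simp
      · rw [Fintype.card_congr (Equiv.refl _), Set.card_range_of_injective hg, Fintype.card_fin]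
    have hct : Fintype.card {y : Fin n // y ∉ Set.range t} = n - s := by
      rw [Fintype.card_subtype_compl]
      congr 1
      · simp
      · rw [Fintype.card_congr (Equiv.refl _), Set.card_range_of_injective ht, Fintype.card_fin]
    set P := fun σ : Equiv.Perm (Fin n) => ∀ i, σ (g i) = t i with hP
    have hiff : ∀ (σ : {σ : Equiv.Perm (Fin n) // P σ}) (a : Fin n),
        a ∉ Set.range g ↔ (σ : Equiv.Perm (Fin n)) a ∉ Set.range t := by
      rintro ⟨σ, hσ⟩ a
      constructor
      · rintro ha ⟨i, hi⟩
        exact ha ⟨i, σ.injective (by rw [hσ i, hi])⟩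
      · rintro ha ⟨i, hi⟩
        exact ha ⟨i, by rw [← hi, hσ i]⟩
    let Φ : {σ : Equiv.Perm (Fin n) // P σ} →
        ({x : Fin n // x ∉ Set.range g} ≃ {y : Fin n // y ∉ Set.range t}) :=
      fun σ => (σ : Equiv.Perm (Fin n)).subtypeEquiv (hiff σ)
    have hΦ : Function.Injective Φ := by
      rintro ⟨σ, hσ⟩ ⟨σ', hσ'⟩ h
      apply Subtype.ext
      apply Equiv.ext
      intro a
      by_cases ha : a ∈ Set.range g
      · obtain ⟨i, rfl⟩ := ha
        rw [hσ i, hσ' i]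
      · have := congrArg (fun e => ((e ⟨a, ha⟩ : {y : Fin n // y ∉ Set.range t}) : Fin n)) h
        simpa [Φ, Equiv.subtypeEquiv] using this
    calc (Finset.univ.filter P).card
        = Fintype.card {σ : Equiv.Perm (Fin n) // P σ} := (Fintype.card_subtype P).symm
      _ ≤ Fintype.card ({x : Fin n // x ∉ Set.range g} ≃ {y : Fin n // y ∉ Set.range t}) :=
          Fintype.card_le_of_injective Φ hΦ
      _ = Nat.factorial (Fintype.card {x : Fin n // x ∉ Set.range g}) :=
          Fintype.card_equiv (Fintype.equivOfCardEq (hcg.trans hct.symm))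
      _ = Nat.factorial (n - s) := by rw [hcg]
  · have : (Finset.univ.filter fun σ : Equiv.Perm (Fin n) => ∀ i, σ (g i) = t i) = ∅ := by
      rw [Finset.filter_eq_empty_iff]
      intro σ _ hσ
      exact hex ⟨σ, hσ⟩
    rw [this]
    simp

end DistinctAux

/-- If `β^1, …, β^s ∈ [n]^{k+1}` have pairwise distinct first coordinates, then
the number of `A ∈ L_n^k` with `A(β^i) = 1` for all `i` is at most
`|L_n^k| (n-s)!/n!`. -/



theorem distinct_first_coordinates_probability (n k s : ℕ) (hn : 1 ≤ n) (hk : 1 ≤ k)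
    (hs : s ≤ n) (β : Fin s → (Fin (k + 1) → Fin n))
    (hβ : Function.Injective (fun i => β i 0)) :
    Nat.factorial n *
      ((HDPerms n k).filter (fun A => ∀ i : Fin s, A (β i) = true)).card
      ≤ (HDPerms n k).card * Nat.factorial (n - s) := by
  classical
  set E := (HDPerms n k).filter (fun A => ∀ i : Fin s, A (β i) = true) with hE
  have hsum1 : ∑ σ : Equiv.Perm (Fin n),
      ((HDPerms n k).filter fun A => ∀ i, DistinctAux.act σ A (β i) = true).card
      = Nat.factorial n * E.card := by
    rw [Finset.sum_congr rfl (fun σ _ => DistinctAux.card_filter_act σ β)]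
    rw [Finset.sum_const, Finset.card_univ, Fintype.card_perm, Fintype.card_fin, smul_eq_mul]
  have hsum2 : ∑ σ : Equiv.Perm (Fin n),
      ((HDPerms n k).filter fun A => ∀ i, DistinctAux.act σ A (β i) = true).card
      = ∑ A ∈ HDPerms n k,
        (Finset.univ.filter fun σ : Equiv.Perm (Fin n) =>
          ∀ i, DistinctAux.act σ A (β i) = true).card := by
    simp only [Finset.card_filter]
    exact Finset.sum_comm
  have hbound : ∀ A ∈ HDPerms n k,
      (Finset.univ.filter fun σ : Equiv.Perm (Fin n) =>
        ∀ i, DistinctAux.act σ A (β i) = true).card ≤ Nat.factorial (n - s) := by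
    intro A hA
    have hA' : IsHDPerm n k A := by
      simpa [HDPerms] using hA
    choose t ht htu using fun i => hA' 0 (β i)
    refine le_trans (Finset.card_le_card ?_)
      (DistinctAux.card_perm_filter_le (fun i => β i 0) t hβ)
    intro σ hσ
    simp only [Finset.mem_filter, Finset.mem_univ, true_and] at hσ ⊢
    intro i
    exact htu i _ (hσ i)
  calc Nat.factorial n * E.card
      = ∑ σ : Equiv.Perm (Fin n),
          ((HDPerms n k).filter fun A => ∀ i, DistinctAux.act σ A (β i) = true).card :=
        hsum1.symm
    _ = ∑ A ∈ HDPerms n k,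
          (Finset.univ.filter fun σ : Equiv.Perm (Fin n) =>
            ∀ i, DistinctAux.act σ A (β i) = true).card := hsum2
    _ ≤ ∑ _A ∈ HDPerms n k, Nat.factorial (n - s) := Finset.sum_le_sum hbound
    _ = (HDPerms n k).card * Nat.factorial (n - s) := by
        rw [Finset.sum_const, smul_eq_mul]
end
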